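/- arXiv:2005.05378 — 14 statements merged into one kernel-verified Lean document; each statement's English description precedes it below -/
import Mathlib

section
/- For every nonzero p ∈ ℂ, the free ℂ-module with basis {L_{i,m} : i ∈ ℤ≥0, m ∈ ℤ, m ≥ −1}, equipped with the ℂ-bilinear bracket determined on basis vectors by [L_{i,m}, L_{j,n}] = ((j+p)(m+1) − (i+p)(n+1))·L_{i+j,m+n} (where L_{i+j,m+n} is read as 0 when m+n < −1; the scalar coefficient vanishes in every such case), is a Lie algebra over ℂ: the bracket is alternating and satisfies the Jacobi identity. -/
namespace Stmt0

/-- Index set for the basis `{L_{i,m} : i ∈ ℕ, m ∈ ℤ, m ≥ -1}`. -/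
def LIdx : Type := {q : ℕ × ℤ // -1 ≤ q.2}

/-- Structure constants: `[L_{i,m}, L_{j,n}] = ((j+p)(m+1) − (i+p)(n+1))·L_{i+j,m+n}`,
where `L_{i+j,m+n}` is read as `0` when `m+n < −1`. -/
noncomputable def str (p : ℂ) (a b : LIdx) : LIdx →₀ ℂ :=
  if h : -1 ≤ a.1.2 + b.1.2 then
    Finsupp.single ⟨(a.1.1 + b.1.1, a.1.2 + b.1.2), h⟩
      (((b.1.1 : ℂ) + p) * ((a.1.2 : ℂ) + 1) - ((a.1.1 : ℂ) + p) * ((b.1.2 : ℂ) + 1))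
  else 0

/-- The ℂ-bilinear extension of the structure constants to the free ℂ-module
`LIdx →₀ ℂ` with basis `LIdx`. -/
noncomputable def br (p : ℂ) (x y : LIdx →₀ ℂ) : LIdx →₀ ℂ :=
  x.sum fun a ca => y.sum fun b cb => (ca * cb) • str p a b

end Stmt0

/-!
Let the basis run over all `L_{i,m}` with `m ∈ ℤ`, i.e. over `ℕ × ℤ`. There the bracket
`[e_a, e_b] = c(a, b) e_{a+b}`, `c((i,m),(j,n)) = (j+p)(m+1) − (i+p)(n+1)`, needs no truncation,
and the truncated bracket is its restriction: `m + n < -1` forces `m = n = -1`, where `c`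
vanishes. For a bracket of this shape on any additive index monoid, antisymmetry and the Jacobi
identity follow by bilinearity from the corresponding identities of `c`, which here are
polynomial identities.
-/

open Finsupp

section GradedBracket

variable {R G : Type*}

noncomputable def gradedBracket [CommSemiring R] [Add G] (c : G → G → R) :
    (G →₀ R) →ₗ[R] (G →₀ R) →ₗ[R] (G →₀ R) :=
  linearCombination R fun a => linearCombination R fun b => single (a + b) (c a b)

theorem gradedBracket_single_single [CommSemiring R] [Add G] (c : G → G → R) (a b : G)
    (r s : R) :
    gradedBracket c (single a r) (single b s) = single (a + b) (r * s * c a b) := by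
  simp only [gradedBracket, linearCombination_single, LinearMap.smul_apply, smul_single,
    smul_eq_mul, mul_assoc]

variable [CommRing R]

theorem gradedBracket_swap [AddCommMagma G] {c : G → G → R} (hanti : ∀ a b, c b a = -c a b)
    (x y : G →₀ R) : gradedBracket c y x = -gradedBracket c x y := by
  induction x using Finsupp.induction_linear with
  | zero => simp
  | add f g hf hg => simp [hf, hg, add_comm]
  | single a r =>
    induction y using Finsupp.induction_linear with
    | zero => simp
    | add f g hf hg => simp [hf, hg, add_comm]
    | single b s => simp [gradedBracket_single_single, hanti a b, add_comm a b, mul_comm r s]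

theorem gradedBracket_self [AddCommMagma G] {c : G → G → R} (hanti : ∀ a b, c b a = -c a b)
    (hdiag : ∀ a, c a a = 0) (x : G →₀ R) : gradedBracket c x x = 0 := by
  induction x using Finsupp.induction_linear with
  | zero => simp
  | add f g hf hg => simp [hf, hg, gradedBracket_swap hanti f g]
  | single a r => simp [gradedBracket_single_single, hdiag]

theorem gradedBracket_jacobi [AddCommSemigroup G] {c : G → G → R}
    (hjacobi : ∀ a b d, c b d * c a (b + d) = c a b * c (a + b) d + c a d * c b (a + d))
    (x y z : G →₀ R) :
    gradedBracket c x (gradedBracket c y z) =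
      gradedBracket c (gradedBracket c x y) z + gradedBracket c y (gradedBracket c x z) := by
  induction x using Finsupp.induction_linear with
  | zero => simp
  | add f g hf hg => simp only [map_add, LinearMap.add_apply, hf, hg]; abel
  | single a r =>
    induction y using Finsupp.induction_linear with
    | zero => simp
    | add f g hf hg => simp only [map_add, LinearMap.add_apply, hf, hg]; abel
    | single b s =>
      induction z using Finsupp.induction_linear with
      | zero => simp
      | add f g hf hg => simp only [map_add, hf, hg]; abel
      | single d t =>
        simp only [gradedBracket_single_single, ← single_add, add_assoc, add_left_comm b a]
        congr 1
        linear_combination (r * s * t) * hjacobi a b d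

end GradedBracket

namespace Stmt0

def blockCoef (p : ℂ) (a b : ℕ × ℤ) : ℂ :=
  ((b.1 : ℂ) + p) * ((a.2 : ℂ) + 1) - ((a.1 : ℂ) + p) * ((b.2 : ℂ) + 1)

theorem blockCoef_swap (p : ℂ) (a b : ℕ × ℤ) : blockCoef p b a = -blockCoef p a b := by
  unfold blockCoef; ring

theorem blockCoef_self (p : ℂ) (a : ℕ × ℤ) : blockCoef p a a = 0 := by
  unfold blockCoef; ring

theorem blockCoef_jacobi (p : ℂ) (a b d : ℕ × ℤ) :
    blockCoef p b d * blockCoef p a (b + d) =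
      blockCoef p a b * blockCoef p (a + b) d + blockCoef p a d * blockCoef p b (a + d) := by
  simp only [blockCoef, Prod.fst_add, Prod.snd_add]
  push_cast
  ring

def LIdx.val (a : LIdx) : ℕ × ℤ := a.1

theorem LIdx.val_injective : Function.Injective LIdx.val := Subtype.val_injective

theorem mapDomain_str (p : ℂ) (a b : LIdx) :
    mapDomain LIdx.val (str p a b) = single (a.val + b.val) (blockCoef p a.val b.val) := by
  unfold str
  split_ifs with h
  · exact mapDomain_single
  · obtain ⟨⟨i, m⟩, hm⟩ := a
    obtain ⟨⟨j, n⟩, hn⟩ := b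
    obtain ⟨rfl, rfl⟩ : m = -1 ∧ n = -1 := by dsimp only at *; omega
    simp [blockCoef, LIdx.val]

theorem lmapDomain_br (p : ℂ) (x y : LIdx →₀ ℂ) :
    lmapDomain ℂ ℂ LIdx.val (br p x y) =
      gradedBracket (blockCoef p) (lmapDomain ℂ ℂ LIdx.val x) (lmapDomain ℂ ℂ LIdx.val y) := by
  simp only [br, map_finsuppSum, map_smul, lmapDomain_apply, mapDomain_str]
  unfold mapDomain
  simp only [map_finsuppSum, LinearMap.finsupp_sum_apply, gradedBracket_single_single,
    smul_single, smul_eq_mul]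
  exact Finsupp.sum_comm ..

theorem lie_algebra_structure_general (p : ℂ) :
    (∀ x : LIdx →₀ ℂ, br p x x = 0) ∧
    (∀ x y z : LIdx →₀ ℂ,
      br p x (br p y z) = br p (br p x y) z + br p y (br p x z)) := by
  have hinj : Function.Injective (lmapDomain ℂ ℂ LIdx.val) := mapDomain_injective LIdx.val_injective
  refine ⟨fun x => hinj ?_, fun x y z => hinj ?_⟩
  · rw [lmapDomain_br, gradedBracket_self (blockCoef_swap p) (blockCoef_self p), map_zero]
  · simp only [map_add, lmapDomain_br]
    exact gradedBracket_jacobi (blockCoef_jacobi p) _ _ _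

/-- For every nonzero `p ∈ ℂ`, the bracket `br p` on the free ℂ-module with basis
`{L_{i,m} : i ∈ ℕ, m ∈ ℤ, m ≥ −1}` determined by
`[L_{i,m}, L_{j,n}] = ((j+p)(m+1) − (i+p)(n+1))·L_{i+j,m+n}` is alternating and
satisfies the Jacobi identity, i.e. it makes this module a Lie algebra over ℂ. -/
theorem lie_algebra_structure (p : ℂ) (hp : p ≠ 0) :
    (∀ x : LIdx →₀ ℂ, br p x x = 0) ∧
    (∀ x y z : LIdx →₀ ℂ,
      br p x (br p y z) = br p (br p x y) z + br p y (br p x z)) :=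
  lie_algebra_structure_general p

end Stmt0
end

section
/- For every nonzero p ∈ ℂ, the free ℂ-module with basis {L_{i,m} : i ∈ ℤ≥0, m ∈ ℤ, m ≥ −1} ∪ {J_{i,n} : i ∈ ℤ≥0, n ∈ ℤ≥0}, equipped with the ℂ-bilinear bracket determined on basis vectors by [L_{i,m}, L_{j,n}] = ((j+p)(m+1) − (i+p)(n+1))·L_{i+j,m+n}, [L_{i,m}, J_{j,n}] = (j(m+1) − (i+p)n)·J_{i+j,m+n} = −[J_{j,n}, L_{i,m}], and [J_{i,m}, J_{j,n}] = 0 (where a basis symbol whose second index is out of range is read as 0; the corresponding scalar coefficient vanishes in every such case), is a Lie algebra over ℂ: the bracket is alternating and satisfies the Jacobi identity. -/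
/-!
Send `L_{i,m} ↦ e_{(i,m)}` and `J_{j,n} ↦ ε e_{(j-p,n-1)}` in `B ⊗ ℂ[ε]/(ε²)`, where `B` has
basis `e_x` (`x ∈ ℂ²`) and `[e_x, e_y] = ((y₁ + p)(x₂ + 1) - (x₁ + p)(y₂ + 1)) e_{x+y}`. This map
of bases is injective and carries the bracket of `A(p)` to that of `B ⊗ ℂ[ε]/(ε²)`: the only
brackets that leave the index range of `A(p)` are `[L_{i,-1}, L_{j,-1}]` and `[L_{i,-1}, J_{j,0}]`,
and their coefficients vanish. The target is a Lie algebra because it is a twisted semigroup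
algebra whose twist `f` satisfies `f b c f a (b+c) = f a b f (a+b) c + f a c f b (a+c)`, a
polynomial identity.
-/

namespace Stmt1

/-- Index set for the basis `{L_{i,m} : i ∈ ℕ, m ∈ ℤ, m ≥ −1} ∪ {J_{i,n} : i, n ∈ ℕ}`. -/
inductive Idx : Type where
  | L : (i : ℕ) → (m : ℤ) → -1 ≤ m → Idx
  | J : ℕ → ℕ → Idx

/-- `[L_{i,m}, L_{j,n}] = ((j+p)(m+1) − (i+p)(n+1))·L_{i+j,m+n}`,
read as `0` when `m+n < −1`. -/
noncomputable def strLL (p : ℂ) (i : ℕ) (m : ℤ) (j : ℕ) (n : ℤ) : Idx →₀ ℂ :=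
  if h : -1 ≤ m + n then
    Finsupp.single (Idx.L (i + j) (m + n) h)
      (((j : ℂ) + p) * ((m : ℂ) + 1) - ((i : ℂ) + p) * ((n : ℂ) + 1))
  else 0

/-- `[L_{i,m}, J_{j,n}] = (j(m+1) − (i+p)n)·J_{i+j,m+n}`, read as `0` when `m+n < 0`. -/
noncomputable def strLJ (p : ℂ) (i : ℕ) (m : ℤ) (j : ℕ) (n : ℕ) : Idx →₀ ℂ :=
  if 0 ≤ m + (n : ℤ) then
    Finsupp.single (Idx.J (i + j) (m + (n : ℤ)).toNat)
      ((j : ℂ) * ((m : ℂ) + 1) - ((i : ℂ) + p) * (n : ℂ))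
  else 0

/-- The structure constants of `A(p)` on basis vectors. -/
noncomputable def str (p : ℂ) : Idx → Idx → (Idx →₀ ℂ)
  | Idx.L i m _, Idx.L j n _ => strLL p i m j n
  | Idx.L i m _, Idx.J j n => strLJ p i m j n
  | Idx.J j n, Idx.L i m _ => -strLJ p i m j n
  | Idx.J _ _, Idx.J _ _ => 0

/-- The ℂ-bilinear extension of the structure constants to the free ℂ-module
`Idx →₀ ℂ`. -/
noncomputable def br (p : ℂ) (x y : Idx →₀ ℂ) : Idx →₀ ℂ :=
  x.sum fun a ca => y.sum fun b cb => (ca * cb) • str p a b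

open Finsupp

section StructureConstants

variable {α R : Type*}

noncomputable def extendBilin [CommSemiring R] (s : α → α → α →₀ R) :
    (α →₀ R) →ₗ[R] (α →₀ R) →ₗ[R] α →₀ R :=
  linearCombination R fun a => linearCombination R (s a)

theorem extendBilin_single_single [CommSemiring R] (s : α → α → α →₀ R) (a b : α) (r t : R) :
    extendBilin s (single a r) (single b t) = (r * t) • s a b := by
  simp [extendBilin, mul_smul, smul_comm r t]

theorem leibniz_of_single [CommSemiring R] (B : (α →₀ R) →ₗ[R] (α →₀ R) →ₗ[R] α →₀ R)
    (h : ∀ a b c, B (single a 1) (B (single b 1) (single c 1)) =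
      B (B (single a 1) (single b 1)) (single c 1) + B (single b 1) (B (single a 1) (single c 1)))
    (x y z : α →₀ R) : B x (B y z) = B (B x y) z + B y (B x z) := by
  induction x using Finsupp.induction_linear with
  | zero => simp
  | add x x' hx hx' => simp only [map_add, LinearMap.add_apply, hx, hx']; abel
  | single a r =>
    induction y using Finsupp.induction_linear with
    | zero => simp
    | add y y' hy hy' => simp only [map_add, LinearMap.add_apply, hy, hy']; abel
    | single b t =>
      induction z using Finsupp.induction_linear with
      | zero => simp
      | add z z' hz hz' => simp only [map_add, hz, hz']; abel
      | single c u =>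
        rw [← smul_single_one a r, ← smul_single_one b t, ← smul_single_one c u]
        simp only [map_smul, LinearMap.smul_apply]
        rw [h]
        module

theorem apply_self_eq_zero_of_single [CommRing R] (B : (α →₀ R) →ₗ[R] (α →₀ R) →ₗ[R] α →₀ R)
    (h₀ : ∀ a, B (single a 1) (single a 1) = 0)
    (hswap : ∀ a b, B (single b 1) (single a 1) = -B (single a 1) (single b 1)) (x : α →₀ R) :
    B x x = 0 := by
  have hflip : B.flip = B.compr₂ (-LinearMap.id) := by
    ext a b c
    simp [hswap a b]
  induction x using Finsupp.induction_linear with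
  | zero => simp
  | add x y hx hy =>
    have hyx : B y x = -B x y := LinearMap.congr_fun₂ hflip x y
    simp [hx, hy, hyx]
  | single a r =>
    rw [← smul_single_one a r]
    simp only [map_smul, LinearMap.smul_apply, h₀, smul_zero]

theorem mapDomain_extendBilin {β : Type*} [CommSemiring R] {s : α → α → α →₀ R}
    {s' : β → β → β →₀ R} {φ : α → β} (h : ∀ a b, mapDomain φ (s a b) = s' (φ a) (φ b))
    (x y : α →₀ R) :
    mapDomain φ (extendBilin s x y) = extendBilin s' (mapDomain φ x) (mapDomain φ y) := by
  have key : (extendBilin s).compr₂ (lmapDomain R R φ) =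
      (extendBilin s').compl₁₂ (lmapDomain R R φ) (lmapDomain R R φ) := by
    ext a b
    simp [extendBilin_single_single, h]
  exact LinearMap.congr_fun₂ key x y

end StructureConstants

section TwistedSemigroupAlgebra

variable {G R : Type*} [AddCommSemigroup G]

noncomputable def twistedBracket [CommSemiring R] (f : G → G → R) :
    (G →₀ R) →ₗ[R] (G →₀ R) →ₗ[R] G →₀ R :=
  extendBilin fun a b => single (a + b) (f a b)

theorem twistedBracket_single_single [CommSemiring R] (f : G → G → R) (a b : G) (r t : R) :
    twistedBracket f (single a r) (single b t) = single (a + b) (r * t * f a b) := by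
  simp [twistedBracket, extendBilin_single_single]

theorem twistedBracket_leibniz [CommSemiring R] {f : G → G → R}
    (hf : ∀ a b c, f b c * f a (b + c) = f a b * f (a + b) c + f a c * f b (a + c))
    (x y z : G →₀ R) :
    twistedBracket f x (twistedBracket f y z) =
      twistedBracket f (twistedBracket f x y) z + twistedBracket f y (twistedBracket f x z) := by
  refine leibniz_of_single _ (fun a b c => ?_) x y z
  simp only [twistedBracket_single_single, one_mul, mul_one]
  rw [add_left_comm b a c, ← add_assoc, ← single_add, hf]

theorem twistedBracket_self [CommRing R] {f : G → G → R} (h₀ : ∀ a, f a a = 0)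
    (hswap : ∀ a b, f b a = -f a b) (x : G →₀ R) : twistedBracket f x x = 0 := by
  refine apply_self_eq_zero_of_single _ (fun a => ?_) (fun a b => ?_) x
  · simp [twistedBracket_single_single, h₀]
  · simp [twistedBracket_single_single, hswap a b, add_comm b a]

end TwistedSemigroupAlgebra

section BlockType

variable {R : Type*} [CommRing R]

/-- Structure constants of `B_c ⊗ R[ε]/(ε^N)`, where `B_c` is the Block-type algebra with basis
`e_x` (`x ∈ R × R`) and `[e_x, e_y] = ((y₁ + c₁)(x₂ + c₂) - (x₁ + c₁)(y₂ + c₂)) e_{x+y}`;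
the `ℕ`-coordinate of an index is the power of `ε`. -/
def blockCoeff (c : R × R) (N : ℕ) (a b : ℕ × R × R) : R :=
  if a.1 + b.1 < N then (b.2.1 + c.1) * (a.2.2 + c.2) - (a.2.1 + c.1) * (b.2.2 + c.2) else 0

theorem blockCoeff_self (c : R × R) (N : ℕ) (a : ℕ × R × R) : blockCoeff c N a a = 0 := by
  simp [blockCoeff]

theorem blockCoeff_swap (c : R × R) (N : ℕ) (a b : ℕ × R × R) :
    blockCoeff c N b a = -blockCoeff c N a b := by
  unfold blockCoeff
  rw [add_comm b.1]
  split_ifs <;> ring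

theorem blockCoeff_cocycle (c : R × R) (N : ℕ) (a b d : ℕ × R × R) :
    blockCoeff c N b d * blockCoeff c N a (b + d) =
      blockCoeff c N a b * blockCoeff c N (a + b) d +
        blockCoeff c N a d * blockCoeff c N b (a + d) := by
  simp only [blockCoeff, Prod.fst_add, Prod.snd_add]
  split_ifs <;> first | omega | ring

end BlockType

theorem br_eq_extendBilin (p : ℂ) (x y : Idx →₀ ℂ) : br p x y = extendBilin (str p) x y := by
  simp [br, extendBilin, linearCombination_apply, Finsupp.sum, Finset.smul_sum, mul_smul]

def embed (p : ℂ) : Idx → ℕ × ℂ × ℂ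
  | .L i m _ => (0, i, m)
  | .J j n => (1, j - p, n - 1)

theorem embed_injective (p : ℂ) : Function.Injective (embed p) := by
  rintro (⟨i, m, hm⟩ | ⟨j, n⟩) (⟨i', m', hm'⟩ | ⟨j', n'⟩) h <;>
    simp only [embed, Prod.mk.injEq, sub_left_inj] at h
  · obtain ⟨-, hi, hm⟩ := h
    obtain rfl : i = i' := by exact_mod_cast hi
    obtain rfl : m = m' := by exact_mod_cast hm
    rfl
  · simp at h
  · simp at h
  · obtain ⟨-, hj, hn⟩ := h
    obtain rfl : j = j' := by exact_mod_cast hj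
    obtain rfl : n = n' := by exact_mod_cast hn
    rfl

theorem mapDomain_embed_strLL (p : ℂ) (i : ℕ) (m : ℤ) (j : ℕ) (n : ℤ) (hm : -1 ≤ m)
    (hn : -1 ≤ n) : mapDomain (embed p) (strLL p i m j n) =
      single (embed p (.L i m hm) + embed p (.L j n hn))
        (blockCoeff (p, 1) 2 (embed p (.L i m hm)) (embed p (.L j n hn))) := by
  unfold strLL
  split_ifs with h
  · rw [mapDomain_single]
    congr 1
    simp [embed]
  · obtain rfl : m = -1 := by omega
    obtain rfl : n = -1 := by omega
    simp [embed, blockCoeff]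

theorem mapDomain_embed_strLJ (p : ℂ) (i : ℕ) (m : ℤ) (j n : ℕ) (hm : -1 ≤ m) :
    mapDomain (embed p) (strLJ p i m j n) =
      single (embed p (.L i m hm) + embed p (.J j n))
        (blockCoeff (p, 1) 2 (embed p (.L i m hm)) (embed p (.J j n))) := by
  unfold strLJ
  split_ifs with h
  · have hcast : (((m + n).toNat : ℕ) : ℂ) = m + n := by exact_mod_cast Int.toNat_of_nonneg h
    rw [mapDomain_single]
    congr 1
    · simp only [embed, Prod.mk_add_mk, hcast, Nat.cast_add]
      congr 2 <;> ring
    · simp [embed, blockCoeff]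
  · obtain rfl : m = -1 := by omega
    obtain rfl : n = 0 := by omega
    simp [embed, blockCoeff]

theorem mapDomain_embed_str (p : ℂ) (a b : Idx) :
    mapDomain (embed p) (str p a b) =
      single (embed p a + embed p b) (blockCoeff (p, 1) 2 (embed p a) (embed p b)) := by
  rcases a with ⟨i, m, hm⟩ | ⟨i, m⟩ <;> rcases b with ⟨j, n, hn⟩ | ⟨j, n⟩
  · exact mapDomain_embed_strLL p i m j n hm hn
  · exact mapDomain_embed_strLJ p i m j n hm
  · rw [str, ← lmapDomain_apply ℂ ℂ, map_neg, lmapDomain_apply,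
      mapDomain_embed_strLJ p j n i m hn, add_comm, blockCoeff_swap, single_neg, neg_neg]
  · simp [str, blockCoeff, embed]

theorem mapDomain_embed_br (p : ℂ) (x y : Idx →₀ ℂ) :
    mapDomain (embed p) (br p x y) =
      twistedBracket (blockCoeff (p, 1) 2) (mapDomain (embed p) x) (mapDomain (embed p) y) := by
  rw [br_eq_extendBilin]
  exact mapDomain_extendBilin (mapDomain_embed_str p) x y

theorem lie_algebra_structure_general (p : ℂ) :
    (∀ x : Idx →₀ ℂ, br p x x = 0) ∧
    (∀ x y z : Idx →₀ ℂ,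
      br p x (br p y z) = br p (br p x y) z + br p y (br p x z)) := by
  have hinj : Function.Injective (mapDomain (embed p) : (Idx →₀ ℂ) → _) :=
    mapDomain_injective (embed_injective p)
  refine ⟨fun x => hinj ?_, fun x y z => hinj ?_⟩
  · rw [mapDomain_embed_br, mapDomain_zero]
    exact twistedBracket_self (blockCoeff_self _ _) (blockCoeff_swap _ _) _
  · simp only [mapDomain_add, mapDomain_embed_br]
    exact twistedBracket_leibniz (blockCoeff_cocycle _ _) _ _ _

/-- For every nonzero `p ∈ ℂ`, the free ℂ-module with basis
`{L_{i,m}} ∪ {J_{i,n}}` equipped with the bracket `br p` is a Lie algebra over ℂ: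
the bracket is alternating and satisfies the Jacobi identity. -/
theorem lie_algebra_structure (p : ℂ) (hp : p ≠ 0) :
    (∀ x : Idx →₀ ℂ, br p x x = 0) ∧
    (∀ x y z : Idx →₀ ℂ,
      br p x (br p y z) = br p (br p x y) z + br p y (br p x z)) :=
  lie_algebra_structure_general p

end Stmt1
end

section
/- Fix a nonzero p ∈ ℂ and an integer n ≥ 1. The ℂ-linear map from A_L(p) to A_L(np) determined on basis vectors by L_{i,m} ↦ (1/n)·L′_{ni,m} is an injective homomorphism of Lie algebras. -/
namespace Stmt3

/-- Index set for the basis `{L_{i,m} : i ∈ ℕ, m ∈ ℤ, m ≥ -1}`. -/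
def LIdx : Type := {q : ℕ × ℤ // -1 ≤ q.2}

/-- Structure constants of `A_L(p)`: `[L_{i,m}, L_{j,n}] = ((j+p)(m+1) − (i+p)(n+1))·L_{i+j,m+n}`,
where `L_{i+j,m+n}` is read as `0` when `m+n < −1`. -/
noncomputable def str (p : ℂ) (a b : LIdx) : LIdx →₀ ℂ :=
  if h : -1 ≤ a.1.2 + b.1.2 then
    Finsupp.single ⟨(a.1.1 + b.1.1, a.1.2 + b.1.2), h⟩
      (((b.1.1 : ℂ) + p) * ((a.1.2 : ℂ) + 1) - ((a.1.1 : ℂ) + p) * ((b.1.2 : ℂ) + 1))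
  else 0

/-- The Lie bracket of `A_L(p)`: the ℂ-bilinear extension of the structure constants. -/
noncomputable def br (p : ℂ) (x y : LIdx →₀ ℂ) : LIdx →₀ ℂ :=
  x.sum fun a ca => y.sum fun b cb => (ca * cb) • str p a b

/-- The ℂ-linear map `A_L(p) → A_L(np)` determined on basis vectors by
`L_{i,m} ↦ (1/n)·L′_{ni,m}`. -/
noncomputable def phi (n : ℕ) : (LIdx →₀ ℂ) →ₗ[ℂ] (LIdx →₀ ℂ) :=
  Finsupp.lsum ℂ fun a =>
    LinearMap.toSpanSingleton ℂ (LIdx →₀ ℂ)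
      ((n : ℂ)⁻¹ • Finsupp.single (⟨(n * a.1.1, a.1.2), a.2⟩ : LIdx) (1 : ℂ))

/-!
Up to the factor `1/n`, `phi n` is induced by the injective index map `(i, m) ↦ (n i, m)`, hence
is injective. The structure constant of `A_L(np)` at `(n i, m), (n j, k)` is `n` times that of
`A_L(p)` at `(i, m), (j, k)`, which the two factors `1/n` on the right of the bracket identity
turn into the single `1/n` on its left; by bilinearity the identity on basis vectors suffices.
-/

def scaleIdx (n : ℕ) (a : LIdx) : LIdx := ⟨(n * a.1.1, a.1.2), a.2⟩

lemma scaleIdx_injective {n : ℕ} (hn : n ≠ 0) : Function.Injective (scaleIdx n) := by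
  intro a b h
  have hi : n * a.1.1 = n * b.1.1 := congrArg (fun c => c.1.1) h
  have hm : a.1.2 = b.1.2 := congrArg (fun c => c.1.2) h
  exact Subtype.ext (Prod.ext (Nat.eq_of_mul_eq_mul_left (Nat.pos_of_ne_zero hn) hi) hm)

lemma str_scaleIdx (p : ℂ) (n : ℕ) (a b : LIdx) :
    str ((n : ℂ) * p) (scaleIdx n a) (scaleIdx n b)
      = (n : ℂ) • Finsupp.mapDomain (scaleIdx n) (str p a b) := by
  by_cases h : -1 ≤ a.1.2 + b.1.2
  · rw [str, str, dif_pos (show -1 ≤ (scaleIdx n a).1.2 + (scaleIdx n b).1.2 from h), dif_pos h]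
    erw [Finsupp.mapDomain_single, Finsupp.smul_single]
    congr 1
    · exact Subtype.ext (Prod.ext (mul_add n a.1.1 b.1.1).symm rfl)
    · simp only [scaleIdx, smul_eq_mul]
      push_cast
      ring
  · rw [str, str, dif_neg (show ¬ -1 ≤ (scaleIdx n a).1.2 + (scaleIdx n b).1.2 from h), dif_neg h,
      Finsupp.mapDomain_zero, smul_zero]

lemma br_single_single (p : ℂ) (a b : LIdx) (c d : ℂ) :
    br p (Finsupp.single a c) (Finsupp.single b d) = (c * d) • str p a b := by
  simp [br]

noncomputable def brₗ (p : ℂ) : (LIdx →₀ ℂ) →ₗ[ℂ] (LIdx →₀ ℂ) →ₗ[ℂ] (LIdx →₀ ℂ) :=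
  Finsupp.lsum ℂ fun a => LinearMap.toSpanSingleton ℂ _
    (Finsupp.lsum ℂ fun b => LinearMap.toSpanSingleton ℂ _ (str p a b))

lemma brₗ_apply (p : ℂ) (x y : LIdx →₀ ℂ) : brₗ p x y = br p x y := by
  rw [br, brₗ, Finsupp.lsum_apply, Finsupp.sum, LinearMap.sum_apply]
  refine Finset.sum_congr rfl fun a _ => ?_
  simp only [LinearMap.toSpanSingleton_apply, LinearMap.smul_apply, Finsupp.lsum_apply,
    Finsupp.smul_sum, smul_smul]

lemma map_br_of_map_str (p q : ℂ) (ψ : (LIdx →₀ ℂ) →ₗ[ℂ] (LIdx →₀ ℂ))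
    (h : ∀ a b, ψ (str p a b) = br q (ψ (Finsupp.single a 1)) (ψ (Finsupp.single b 1)))
    (x y : LIdx →₀ ℂ) : ψ (br p x y) = br q (ψ x) (ψ y) := by
  simp only [← brₗ_apply]
  suffices (brₗ p).compr₂ ψ = (brₗ q).compl₁₂ ψ ψ from LinearMap.congr_fun₂ this x y
  refine Finsupp.lhom_ext fun a c => Finsupp.lhom_ext fun b d => ?_
  rw [← Finsupp.smul_single_one a c, ← Finsupp.smul_single_one b d]
  simp only [LinearMap.compr₂_apply, LinearMap.compl₁₂_apply, map_smul, LinearMap.smul_apply,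
    brₗ_apply, br_single_single, h, one_mul, one_smul]

lemma phi_apply (n : ℕ) (x : LIdx →₀ ℂ) :
    phi n x = (n : ℂ)⁻¹ • Finsupp.mapDomain (scaleIdx n) x := by
  rw [Finsupp.mapDomain, Finsupp.smul_sum]
  refine Finsupp.sum_congr fun a _ => ?_
  change x a • ((n : ℂ)⁻¹ • Finsupp.single (scaleIdx n a) (1 : ℂ)) = _
  rw [smul_comm, Finsupp.smul_single, smul_eq_mul, mul_one]

lemma phi_injective {n : ℕ} (hn : n ≠ 0) : Function.Injective (phi n) := by
  intro x y hxy
  rw [phi_apply, phi_apply] at hxy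
  exact Finsupp.mapDomain_injective (scaleIdx_injective hn)
    (smul_right_injective _ (inv_ne_zero (Nat.cast_ne_zero.2 hn)) hxy)

lemma phi_str {n : ℕ} (hn : n ≠ 0) (p : ℂ) (a b : LIdx) :
    phi n (str p a b) =
      br ((n : ℂ) * p) (phi n (Finsupp.single a 1)) (phi n (Finsupp.single b 1)) := by
  have hn0 : (n : ℂ) ≠ 0 := Nat.cast_ne_zero.2 hn
  rw [phi_apply, phi_apply, phi_apply, Finsupp.mapDomain_single, Finsupp.mapDomain_single,
    Finsupp.smul_single_one, Finsupp.smul_single_one, br_single_single, str_scaleIdx, smul_smul]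
  congr 1
  field_simp

theorem phi_injective_lieHom_general (p : ℂ) (n : ℕ) (hn : 1 ≤ n) :
    Function.Injective (phi n) ∧
    (∀ x y : LIdx →₀ ℂ, phi n (br p x y) = br ((n : ℂ) * p) (phi n x) (phi n y)) := by
  have hn0 : n ≠ 0 := by omega
  exact ⟨phi_injective hn0, map_br_of_map_str _ _ _ (phi_str hn0 p)⟩

/-- For nonzero `p ∈ ℂ` and an integer `n ≥ 1`, the ℂ-linear map `A_L(p) → A_L(np)`
determined by `L_{i,m} ↦ (1/n)·L′_{ni,m}` is an injective homomorphism of Lie algebras. -/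
theorem phi_injective_lieHom (p : ℂ) (hp : p ≠ 0) (n : ℕ) (hn : 1 ≤ n) :
    Function.Injective (phi n) ∧
    (∀ x y : LIdx →₀ ℂ, phi n (br p x y) = br ((n : ℂ) * p) (phi n x) (phi n y)) :=
  phi_injective_lieHom_general p n hn

end Stmt3
end

section
/- Fix a nonzero p ∈ ℂ. The ℂ-span A₊(p) of {L_{i,m} : i ≥ 0, m ≥ 0} ∪ {J_{i,n} : i ≥ 0, n ≥ 1} is a Lie subalgebra of A(p), and for all integers k, N ≥ 0 the ℂ-span I(k,N) of the basis vectors L_{i,m} with (i > k or m > N) together with the J_{i,n} with (i > k or n > N+1) is a Lie ideal of A₊(p). -/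
namespace Stmt5

/-- Index set for the basis `{L_{i,m} : i ∈ ℕ, m ∈ ℤ, m ≥ −1} ∪ {J_{i,n} : i, n ∈ ℕ}`
of the Lie algebra `A(p)`. -/
inductive Idx : Type where
  | L : (i : ℕ) → (m : ℤ) → -1 ≤ m → Idx
  | J : ℕ → ℕ → Idx

/-- `[L_{i,m}, L_{j,n}] = ((j+p)(m+1) − (i+p)(n+1))·L_{i+j,m+n}`,
read as `0` when `m+n < −1`. -/
noncomputable def strLL (p : ℂ) (i : ℕ) (m : ℤ) (j : ℕ) (n : ℤ) : Idx →₀ ℂ :=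
  if h : -1 ≤ m + n then
    Finsupp.single (Idx.L (i + j) (m + n) h)
      (((j : ℂ) + p) * ((m : ℂ) + 1) - ((i : ℂ) + p) * ((n : ℂ) + 1))
  else 0

/-- `[L_{i,m}, J_{j,n}] = (j(m+1) − (i+p)n)·J_{i+j,m+n}`, read as `0` when `m+n < 0`. -/
noncomputable def strLJ (p : ℂ) (i : ℕ) (m : ℤ) (j : ℕ) (n : ℕ) : Idx →₀ ℂ :=
  if 0 ≤ m + (n : ℤ) then
    Finsupp.single (Idx.J (i + j) (m + (n : ℤ)).toNat)
      ((j : ℂ) * ((m : ℂ) + 1) - ((i : ℂ) + p) * (n : ℂ))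
  else 0

/-- The structure constants of `A(p)` on basis vectors. -/
noncomputable def str (p : ℂ) : Idx → Idx → (Idx →₀ ℂ)
  | Idx.L i m _, Idx.L j n _ => strLL p i m j n
  | Idx.L i m _, Idx.J j n => strLJ p i m j n
  | Idx.J j n, Idx.L i m _ => -strLJ p i m j n
  | Idx.J _ _, Idx.J _ _ => 0

/-- The Lie bracket of `A(p)`: the ℂ-bilinear extension of the structure constants
to the free ℂ-module `Idx →₀ ℂ`. -/
noncomputable def br (p : ℂ) (x y : Idx →₀ ℂ) : Idx →₀ ℂ :=
  x.sum fun a ca => y.sum fun b cb => (ca * cb) • str p a b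

/-- The basis vector attached to an index. -/
noncomputable def e (a : Idx) : Idx →₀ ℂ := Finsupp.single a 1

/-- The predicate picking out the basis vectors of `A₊(p)`:
`L_{i,m}` with `m ≥ 0` and `J_{i,n}` with `n ≥ 1`. -/
def inPlus : Idx → Prop
  | Idx.L _ m _ => 0 ≤ m
  | Idx.J _ n => 1 ≤ n

/-- The Lie subalgebra `A₊(p)`: the ℂ-span of `{L_{i,m} : i ≥ 0, m ≥ 0} ∪ {J_{i,n} : i ≥ 0, n ≥ 1}`. -/
noncomputable def Aplus : Submodule ℂ (Idx →₀ ℂ) :=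
  Submodule.span ℂ {x : Idx →₀ ℂ | ∃ a : Idx, inPlus a ∧ x = e a}

/-- The predicate picking out the basis vectors of `I(k,N)` (among the basis
vectors of `A₊(p)`): `L_{i,m}` with `m ≥ 0` and (`i > k` or `m > N`), and
`J_{i,n}` with `n ≥ 1` and (`i > k` or `n > N+1`). -/
def inI (k N : ℕ) : Idx → Prop
  | Idx.L i m _ => 0 ≤ m ∧ (k < i ∨ (N : ℤ) < m)
  | Idx.J i n => 1 ≤ n ∧ (k < i ∨ N + 1 < n)

/-- The ℂ-span `I(k,N)` of the basis vectors `L_{i,m}` with (`i > k` or `m > N`)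
together with the `J_{i,n}` with (`i > k` or `n > N+1`). -/
noncomputable def Ikn (k N : ℕ) : Submodule ℂ (Idx →₀ ℂ) :=
  Submodule.span ℂ {x : Idx →₀ ℂ | ∃ a : Idx, inI k N a ∧ x = e a}

lemma br_zero_right (p : ℂ) (x : Idx →₀ ℂ) : br p x 0 = 0 := by
  simp [br]

lemma br_zero_left (p : ℂ) (y : Idx →₀ ℂ) : br p 0 y = 0 := by
  simp [br]

lemma br_add_right (p : ℂ) (x y z : Idx →₀ ℂ) : br p x (y + z) = br p x y + br p x z := by
  unfold br
  rw [← Finsupp.sum_add]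
  refine Finsupp.sum_congr fun a _ => ?_
  rw [Finsupp.sum_add_index' (by simp) (by intro b c1 c2; rw [mul_add, add_smul])]

lemma br_add_left (p : ℂ) (x y z : Idx →₀ ℂ) : br p (x + y) z = br p x z + br p y z := by
  unfold br
  rw [Finsupp.sum_add_index' (by simp) (by intro b c1 c2; simp [add_mul, add_smul, Finsupp.sum_add])]

lemma br_smul_right (p : ℂ) (c : ℂ) (x y : Idx →₀ ℂ) : br p x (c • y) = c • br p x y := by
  unfold br
  rw [Finsupp.smul_sum]
  refine Finsupp.sum_congr fun a _ => ?_
  rw [Finsupp.sum_smul_index (by simp), Finsupp.smul_sum]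
  refine Finsupp.sum_congr fun b _ => ?_
  rw [smul_smul]; ring_nf

lemma br_smul_left (p : ℂ) (c : ℂ) (x y : Idx →₀ ℂ) : br p (c • x) y = c • br p x y := by
  unfold br
  rw [Finsupp.sum_smul_index (by simp), Finsupp.smul_sum]
  refine Finsupp.sum_congr fun a _ => ?_
  rw [Finsupp.smul_sum]
  refine Finsupp.sum_congr fun b _ => ?_
  rw [smul_smul]; ring_nf

lemma br_e_e (p : ℂ) (a b : Idx) : br p (e a) (e b) = str p a b := by
  simp [br, e, Finsupp.sum_single_index]

lemma mem_span_e {P : Idx → Prop} {a : Idx} (h : P a) (c : ℂ) :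
    Finsupp.single a c ∈ Submodule.span ℂ {x : Idx →₀ ℂ | ∃ b, P b ∧ x = e b} := by
  have hc : Finsupp.single a c = c • e a := by simp [e, Finsupp.smul_single]
  rw [hc]
  exact Submodule.smul_mem _ _ (Submodule.subset_span ⟨a, h, rfl⟩)

lemma br_mem (p : ℂ) {S T : Idx → Prop} {U : Submodule ℂ (Idx →₀ ℂ)}
    (h : ∀ a, S a → ∀ b, T b → str p a b ∈ U) {x y : Idx →₀ ℂ}
    (hx : x ∈ Submodule.span ℂ {v : Idx →₀ ℂ | ∃ a, S a ∧ v = e a})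
    (hy : y ∈ Submodule.span ℂ {v : Idx →₀ ℂ | ∃ a, T a ∧ v = e a}) :
    br p x y ∈ U := by
  induction hx using Submodule.span_induction with
  | mem v hv =>
    obtain ⟨a, ha, rfl⟩ := hv
    induction hy using Submodule.span_induction with
    | mem w hw =>
      obtain ⟨b, hb, rfl⟩ := hw
      rw [br_e_e]
      exact h a ha b hb
    | zero => rw [br_zero_right]; exact U.zero_mem
    | add y z _ _ ihy ihz => rw [br_add_right]; exact U.add_mem ihy ihz
    | smul c y _ ihy => rw [br_smul_right]; exact U.smul_mem c ihy
  | zero => rw [br_zero_left]; exact U.zero_mem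
  | add x z _ _ ihx ihz => rw [br_add_left]; exact U.add_mem ihx ihz
  | smul c x _ ihx => rw [br_smul_left]; exact U.smul_mem c ihx

lemma str_mem_plus (p : ℂ) {a b : Idx} (ha : inPlus a) (hb : inPlus b) :
    str p a b ∈ Aplus := by
  cases a with
  | L i m hm =>
    cases b with
    | L j n hn =>
      have ha' : 0 ≤ m := ha
      have hb' : 0 ≤ n := hb
      show strLL p i m j n ∈ Aplus
      rw [strLL, dif_pos (by omega : (-1 : ℤ) ≤ m + n)]
      exact mem_span_e (show (0:ℤ) ≤ m + n by omega) _
    | J j n =>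
      have ha' : 0 ≤ m := ha
      have hb' : 1 ≤ n := hb
      show strLJ p i m j n ∈ Aplus
      rw [strLJ, if_pos (by omega : (0 : ℤ) ≤ m + n)]
      exact mem_span_e (show 1 ≤ (m + (n:ℤ)).toNat by omega) _
  | J j n =>
    cases b with
    | L i m hm =>
      have ha' : 1 ≤ n := ha
      have hb' : 0 ≤ m := hb
      show -strLJ p i m j n ∈ Aplus
      refine Submodule.neg_mem _ ?_
      rw [strLJ, if_pos (by omega : (0 : ℤ) ≤ m + n)]
      exact mem_span_e (show 1 ≤ (m + (n:ℤ)).toNat by omega) _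
    | J j' n' => exact Submodule.zero_mem _

lemma str_mem_I (p : ℂ) (k N : ℕ) {a b : Idx} (ha : inPlus a) (hb : inI k N b) :
    str p a b ∈ Ikn k N := by
  cases a with
  | L i m hm =>
    cases b with
    | L j n hn =>
      have ha' : 0 ≤ m := ha
      obtain ⟨hb1, hb2⟩ := hb
      show strLL p i m j n ∈ Ikn k N
      rw [strLL, dif_pos (by omega : (-1 : ℤ) ≤ m + n)]
      exact mem_span_e (show (0:ℤ) ≤ m + n ∧ (k < i + j ∨ (N:ℤ) < m + n) by omega) _
    | J j n =>
      have ha' : 0 ≤ m := ha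
      obtain ⟨hb1, hb2⟩ := hb
      show strLJ p i m j n ∈ Ikn k N
      rw [strLJ, if_pos (by omega : (0 : ℤ) ≤ m + n)]
      exact mem_span_e
        (show 1 ≤ (m + (n:ℤ)).toNat ∧ (k < i + j ∨ N + 1 < (m + (n:ℤ)).toNat) by omega) _
  | J j n =>
    cases b with
    | L i m hm =>
      have ha' : 1 ≤ n := ha
      obtain ⟨hb1, hb2⟩ := hb
      show -strLJ p i m j n ∈ Ikn k N
      refine Submodule.neg_mem _ ?_
      rw [strLJ, if_pos (by omega : (0 : ℤ) ≤ m + n)]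
      exact mem_span_e
        (show 1 ≤ (m + (n:ℤ)).toNat ∧ (k < i + j ∨ N + 1 < (m + (n:ℤ)).toNat) by omega) _
    | J j' n' => exact Submodule.zero_mem _

lemma str_mem_I' (p : ℂ) (k N : ℕ) {a b : Idx} (ha : inI k N a) (hb : inPlus b) :
    str p a b ∈ Ikn k N := by
  cases a with
  | L i m hm =>
    cases b with
    | L j n hn =>
      obtain ⟨ha1, ha2⟩ := ha
      have hb' : 0 ≤ n := hb
      show strLL p i m j n ∈ Ikn k N
      rw [strLL, dif_pos (by omega : (-1 : ℤ) ≤ m + n)]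
      exact mem_span_e (show (0:ℤ) ≤ m + n ∧ (k < i + j ∨ (N:ℤ) < m + n) by omega) _
    | J j n =>
      obtain ⟨ha1, ha2⟩ := ha
      have hb' : 1 ≤ n := hb
      show strLJ p i m j n ∈ Ikn k N
      rw [strLJ, if_pos (by omega : (0 : ℤ) ≤ m + n)]
      exact mem_span_e
        (show 1 ≤ (m + (n:ℤ)).toNat ∧ (k < i + j ∨ N + 1 < (m + (n:ℤ)).toNat) by omega) _
  | J j n =>
    cases b with
    | L i m hm =>
      obtain ⟨ha1, ha2⟩ := ha
      have hb' : 0 ≤ m := hb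
      show -strLJ p i m j n ∈ Ikn k N
      refine Submodule.neg_mem _ ?_
      rw [strLJ, if_pos (by omega : (0 : ℤ) ≤ m + n)]
      exact mem_span_e
        (show 1 ≤ (m + (n:ℤ)).toNat ∧ (k < i + j ∨ N + 1 < (m + (n:ℤ)).toNat) by omega) _
    | J j' n' => exact Submodule.zero_mem _

/-- For nonzero `p ∈ ℂ`: `A₊(p)` is a Lie subalgebra of `A(p)`, and for all
integers `k, N ≥ 0` the span `I(k,N)` is a Lie ideal of `A₊(p)`. -/
theorem Aplus_subalgebra_and_Ikn_ideal (p : ℂ) (hp : p ≠ 0) :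
    (∀ x ∈ Aplus, ∀ y ∈ Aplus, br p x y ∈ Aplus) ∧
    (∀ k N : ℕ, ∀ x ∈ Aplus, ∀ y ∈ Ikn k N,
      br p x y ∈ Ikn k N ∧ br p y x ∈ Ikn k N) := by
  constructor
  · intro x hx y hy
    exact br_mem p (fun a ha b hb => str_mem_plus p ha hb) hx hy
  · intro k N x hx y hy
    exact ⟨br_mem p (fun a ha b hb => str_mem_I p k N ha hb) hx hy,
           br_mem p (fun a ha b hb => str_mem_I' p k N ha hb) hy hx⟩


end Stmt5
end

section
/- Fix a nonzero p ∈ ℂ and an integer k ≥ 1, and let N ≥ 0 be an integer. In the quotient Lie algebra g(k,N) = A₊(p)/I(k,N), the image of the ℂ-span of {L_{k,m} : 0 ≤ m ≤ N} ∪ {J_{k,n} : 1 ≤ n ≤ N+1} is an abelian Lie ideal of g(k,N). -/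
namespace Stmt6

/-- Index set for the basis `{L_{i,m} : i ∈ ℕ, m ∈ ℤ, m ≥ −1} ∪ {J_{i,n} : i, n ∈ ℕ}`
of the Lie algebra `A(p)`. -/
inductive Idx : Type where
  | L : (i : ℕ) → (m : ℤ) → -1 ≤ m → Idx
  | J : ℕ → ℕ → Idx

/-- `[L_{i,m}, L_{j,n}] = ((j+p)(m+1) − (i+p)(n+1))·L_{i+j,m+n}`,
read as `0` when `m+n < −1`. -/
noncomputable def strLL (p : ℂ) (i : ℕ) (m : ℤ) (j : ℕ) (n : ℤ) : Idx →₀ ℂ :=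
  if h : -1 ≤ m + n then
    Finsupp.single (Idx.L (i + j) (m + n) h)
      (((j : ℂ) + p) * ((m : ℂ) + 1) - ((i : ℂ) + p) * ((n : ℂ) + 1))
  else 0

/-- `[L_{i,m}, J_{j,n}] = (j(m+1) − (i+p)n)·J_{i+j,m+n}`, read as `0` when `m+n < 0`. -/
noncomputable def strLJ (p : ℂ) (i : ℕ) (m : ℤ) (j : ℕ) (n : ℕ) : Idx →₀ ℂ :=
  if 0 ≤ m + (n : ℤ) then
    Finsupp.single (Idx.J (i + j) (m + (n : ℤ)).toNat)
      ((j : ℂ) * ((m : ℂ) + 1) - ((i : ℂ) + p) * (n : ℂ))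
  else 0

/-- The structure constants of `A(p)` on basis vectors. -/
noncomputable def str (p : ℂ) : Idx → Idx → (Idx →₀ ℂ)
  | Idx.L i m _, Idx.L j n _ => strLL p i m j n
  | Idx.L i m _, Idx.J j n => strLJ p i m j n
  | Idx.J j n, Idx.L i m _ => -strLJ p i m j n
  | Idx.J _ _, Idx.J _ _ => 0

/-- The Lie bracket of `A(p)`: the ℂ-bilinear extension of the structure constants
to the free ℂ-module `Idx →₀ ℂ`. -/
noncomputable def br (p : ℂ) (x y : Idx →₀ ℂ) : Idx →₀ ℂ :=
  x.sum fun a ca => y.sum fun b cb => (ca * cb) • str p a b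

/-- The basis vector attached to an index. -/
noncomputable def e (a : Idx) : Idx →₀ ℂ := Finsupp.single a 1

/-- The predicate picking out the basis vectors of `A₊(p)`:
`L_{i,m}` with `m ≥ 0` and `J_{i,n}` with `n ≥ 1`. -/
def inPlus : Idx → Prop
  | Idx.L _ m _ => 0 ≤ m
  | Idx.J _ n => 1 ≤ n

/-- The Lie subalgebra `A₊(p)`: the ℂ-span of `{L_{i,m} : i ≥ 0, m ≥ 0} ∪ {J_{i,n} : i ≥ 0, n ≥ 1}`. -/
noncomputable def Aplus : Submodule ℂ (Idx →₀ ℂ) :=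
  Submodule.span ℂ {x : Idx →₀ ℂ | ∃ a : Idx, inPlus a ∧ x = e a}

/-- The predicate picking out the basis vectors of `I(k,N)` (among the basis
vectors of `A₊(p)`): `L_{i,m}` with `m ≥ 0` and (`i > k` or `m > N`), and
`J_{i,n}` with `n ≥ 1` and (`i > k` or `n > N+1`). -/
def inI (k N : ℕ) : Idx → Prop
  | Idx.L i m _ => 0 ≤ m ∧ (k < i ∨ (N : ℤ) < m)
  | Idx.J i n => 1 ≤ n ∧ (k < i ∨ N + 1 < n)

/-- The ℂ-span `I(k,N)` of the basis vectors `L_{i,m}` with (`i > k` or `m > N`)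
together with the `J_{i,n}` with (`i > k` or `n > N+1`). -/
noncomputable def Ikn (k N : ℕ) : Submodule ℂ (Idx →₀ ℂ) :=
  Submodule.span ℂ {x : Idx →₀ ℂ | ∃ a : Idx, inI k N a ∧ x = e a}

/-- The predicate picking out the basis vectors `{L_{k,m} : 0 ≤ m ≤ N} ∪ {J_{k,n} : 1 ≤ n ≤ N+1}`
spanning the (even part of the) row ideal `𝔯(k,N)`. -/
def inRow (k N : ℕ) : Idx → Prop
  | Idx.L i m _ => i = k ∧ 0 ≤ m ∧ m ≤ (N : ℤ)
  | Idx.J i n => i = k ∧ 1 ≤ n ∧ n ≤ N + 1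

/-- The ℂ-span of `{L_{k,m} : 0 ≤ m ≤ N} ∪ {J_{k,n} : 1 ≤ n ≤ N+1}`. -/
noncomputable def rowSpan (k N : ℕ) : Submodule ℂ (Idx →₀ ℂ) :=
  Submodule.span ℂ {x : Idx →₀ ℂ | ∃ a : Idx, inRow k N a ∧ x = e a}


lemma single_mem_span (P : Idx → Prop) (c : Idx) (v : ℂ) (h : P c) :
    Finsupp.single c v ∈ Submodule.span ℂ {x : Idx →₀ ℂ | ∃ a, P a ∧ x = e a} := by
  have hv : Finsupp.single c v = v • e c := by simp [e, Finsupp.smul_single]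
  rw [hv]
  exact Submodule.smul_mem _ _ (Submodule.subset_span ⟨c, h, rfl⟩)

lemma span_eq_supported (P : Idx → Prop) :
    Submodule.span ℂ {x : Idx →₀ ℂ | ∃ a, P a ∧ x = e a}
      = Finsupp.supported ℂ ℂ {a | P a} := by
  rw [Finsupp.supported_eq_span_single]
  congr 1
  ext x
  simp only [Set.mem_setOf_eq, Set.mem_image, e]
  constructor
  · rintro ⟨a, hPa, rfl⟩; exact ⟨a, hPa, rfl⟩
  · rintro ⟨a, hPa, rfl⟩; exact ⟨a, hPa, rfl⟩

lemma supp_of_mem_span (P : Idx → Prop) (x : Idx →₀ ℂ)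
    (hx : x ∈ Submodule.span ℂ {x : Idx →₀ ℂ | ∃ a, P a ∧ x = e a}) :
    ∀ a ∈ x.support, P a := by
  rw [span_eq_supported] at hx
  exact fun a ha => (Finsupp.mem_supported ℂ x).mp hx ha

lemma sup_eq_span (k N : ℕ) :
    rowSpan k N ⊔ Ikn k N
      = Submodule.span ℂ {x : Idx →₀ ℂ | ∃ a, (inRow k N a ∨ inI k N a) ∧ x = e a} := by
  rw [rowSpan, Ikn, ← Submodule.span_union]
  congr 1
  ext x
  simp only [Set.mem_union, Set.mem_setOf_eq]
  constructor
  · rintro (⟨a, h, rfl⟩ | ⟨a, h, rfl⟩)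
    · exact ⟨a, Or.inl h, rfl⟩
    · exact ⟨a, Or.inr h, rfl⟩
  · rintro ⟨a, h | h, rfl⟩
    · exact Or.inl ⟨a, h, rfl⟩
    · exact Or.inr ⟨a, h, rfl⟩

lemma rowOrI_inPlus {k N : ℕ} {a : Idx} (h : inRow k N a ∨ inI k N a) : inPlus a := by
  obtain ⟨i, m, hm⟩ | ⟨i, m⟩ := a <;>
    simp only [inRow, inI, inPlus] at * <;> omega

lemma br_mem (p : ℂ) (S : Submodule ℂ (Idx →₀ ℂ)) (x y : Idx →₀ ℂ)
    (h : ∀ a ∈ x.support, ∀ b ∈ y.support, str p a b ∈ S) :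
    br p x y ∈ S := by
  apply Submodule.sum_mem
  intro a ha
  apply Submodule.sum_mem
  intro b hb
  exact Submodule.smul_mem _ _ (h a ha b hb)

lemma str_mem_M (p : ℂ) (k N : ℕ) (a b : Idx) (ha : inPlus a) (hb : inPlus b)
    (h : (inRow k N a ∨ inI k N a) ∨ (inRow k N b ∨ inI k N b)) :
    str p a b ∈ rowSpan k N ⊔ Ikn k N := by
  rw [sup_eq_span]
  obtain ⟨i, m, hm⟩ | ⟨i, m⟩ := a <;> obtain ⟨j, n, hn⟩ | ⟨j, n⟩ := b <;>
    simp only [str, strLL, strLJ, inPlus, inRow, inI] at *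
  · split_ifs with h'
    · exact single_mem_span _ _ _ (by simp only [inRow, inI]; omega)
    · exact Submodule.zero_mem _
  · split_ifs with h'
    · exact single_mem_span _ _ _ (by simp only [inRow, inI]; omega)
    · exact Submodule.zero_mem _
  · apply Submodule.neg_mem
    split_ifs with h'
    · exact single_mem_span _ _ _ (by simp only [inRow, inI]; omega)
    · exact Submodule.zero_mem _
  · exact Submodule.zero_mem _

lemma str_mem_I (p : ℂ) (k N : ℕ) (hk : 1 ≤ k) (a b : Idx)
    (ha : inRow k N a ∨ inI k N a) (hb : inRow k N b ∨ inI k N b) :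
    str p a b ∈ Ikn k N := by
  rw [Ikn]
  obtain ⟨i, m, hm⟩ | ⟨i, m⟩ := a <;> obtain ⟨j, n, hn⟩ | ⟨j, n⟩ := b <;>
    simp only [str, strLL, strLJ, inRow, inI] at *
  · split_ifs with h'
    · exact single_mem_span _ _ _ (by simp only [inI]; omega)
    · exact Submodule.zero_mem _
  · split_ifs with h'
    · exact single_mem_span _ _ _ (by simp only [inI]; omega)
    · exact Submodule.zero_mem _
  · apply Submodule.neg_mem
    split_ifs with h'
    · exact single_mem_span _ _ _ (by simp only [inI]; omega)
    · exact Submodule.zero_mem _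
  · exact Submodule.zero_mem _

/-- For nonzero `p ∈ ℂ` and integers `k ≥ 1`, `N ≥ 0`: in the quotient Lie algebra
`g(k,N) = A₊(p)/I(k,N)`, the image of the span of
`{L_{k,m} : 0 ≤ m ≤ N} ∪ {J_{k,n} : 1 ≤ n ≤ N+1}` is an abelian Lie ideal.
Stated upstairs: the preimage `rowSpan k N ⊔ Ikn k N` is bracket-stable under
`A₊(p)` (so its image is an ideal of the quotient), and the bracket of any two
of its elements lies in `I(k,N)` (so the image is abelian). -/
theorem row_ideal_abelian (p : ℂ) (hp : p ≠ 0) (k N : ℕ) (hk : 1 ≤ k) :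
    (∀ x ∈ Aplus, ∀ y ∈ rowSpan k N ⊔ Ikn k N,
      br p x y ∈ rowSpan k N ⊔ Ikn k N ∧ br p y x ∈ rowSpan k N ⊔ Ikn k N) ∧
    (∀ y ∈ rowSpan k N ⊔ Ikn k N, ∀ z ∈ rowSpan k N ⊔ Ikn k N,
      br p y z ∈ Ikn k N) := by
  constructor
  · intro x hx y hy
    have hxs : ∀ a ∈ x.support, inPlus a := supp_of_mem_span _ _ hx
    have hys : ∀ b ∈ y.support, inRow k N b ∨ inI k N b := by
      refine supp_of_mem_span _ _ ?_
      rwa [← sup_eq_span]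
    constructor
    · exact br_mem p _ x y fun a ha b hb =>
        str_mem_M p k N a b (hxs a ha) (rowOrI_inPlus (hys b hb)) (Or.inr (hys b hb))
    · exact br_mem p _ y x fun b hb a ha =>
        str_mem_M p k N b a (rowOrI_inPlus (hys b hb)) (hxs a ha) (Or.inl (hys b hb))
  · intro y hy z hz
    have hys : ∀ b ∈ y.support, inRow k N b ∨ inI k N b := by
      refine supp_of_mem_span _ _ ?_
      rwa [← sup_eq_span]
    have hzs : ∀ b ∈ z.support, inRow k N b ∨ inI k N b := by
      refine supp_of_mem_span _ _ ?_
      rwa [← sup_eq_span]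
    exact br_mem p _ y z fun a ha b hb => str_mem_I p k N hk a b (hys a ha) (hzs b hb)

end Stmt6
end

section
/- Fix a nonzero p ∈ ℂ, an integer k ≥ 0, and an integer N ≥ 1. In the quotient Lie algebra g(k,N) = A₊(p)/I(k,N), the image of the ℂ-span of {L_{i,N} : 0 ≤ i ≤ k} ∪ {J_{i,N+1} : 0 ≤ i ≤ k} is an abelian Lie ideal of g(k,N). -/
namespace Stmt7

/-- Index set for the basis `{L_{i,m} : i ∈ ℕ, m ∈ ℤ, m ≥ −1} ∪ {J_{i,n} : i, n ∈ ℕ}`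
of the Lie algebra `A(p)`. -/
inductive Idx : Type where
  | L : (i : ℕ) → (m : ℤ) → -1 ≤ m → Idx
  | J : ℕ → ℕ → Idx

/-- `[L_{i,m}, L_{j,n}] = ((j+p)(m+1) − (i+p)(n+1))·L_{i+j,m+n}`,
read as `0` when `m+n < −1`. -/
noncomputable def strLL (p : ℂ) (i : ℕ) (m : ℤ) (j : ℕ) (n : ℤ) : Idx →₀ ℂ :=
  if h : -1 ≤ m + n then
    Finsupp.single (Idx.L (i + j) (m + n) h)
      (((j : ℂ) + p) * ((m : ℂ) + 1) - ((i : ℂ) + p) * ((n : ℂ) + 1))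
  else 0

/-- `[L_{i,m}, J_{j,n}] = (j(m+1) − (i+p)n)·J_{i+j,m+n}`, read as `0` when `m+n < 0`. -/
noncomputable def strLJ (p : ℂ) (i : ℕ) (m : ℤ) (j : ℕ) (n : ℕ) : Idx →₀ ℂ :=
  if 0 ≤ m + (n : ℤ) then
    Finsupp.single (Idx.J (i + j) (m + (n : ℤ)).toNat)
      ((j : ℂ) * ((m : ℂ) + 1) - ((i : ℂ) + p) * (n : ℂ))
  else 0

/-- The structure constants of `A(p)` on basis vectors. -/
noncomputable def str (p : ℂ) : Idx → Idx → (Idx →₀ ℂ)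
  | Idx.L i m _, Idx.L j n _ => strLL p i m j n
  | Idx.L i m _, Idx.J j n => strLJ p i m j n
  | Idx.J j n, Idx.L i m _ => -strLJ p i m j n
  | Idx.J _ _, Idx.J _ _ => 0

/-- The Lie bracket of `A(p)`: the ℂ-bilinear extension of the structure constants
to the free ℂ-module `Idx →₀ ℂ`. -/
noncomputable def br (p : ℂ) (x y : Idx →₀ ℂ) : Idx →₀ ℂ :=
  x.sum fun a ca => y.sum fun b cb => (ca * cb) • str p a b

/-- The basis vector attached to an index. -/
noncomputable def e (a : Idx) : Idx →₀ ℂ := Finsupp.single a 1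

/-- The predicate picking out the basis vectors of `A₊(p)`:
`L_{i,m}` with `m ≥ 0` and `J_{i,n}` with `n ≥ 1`. -/
def inPlus : Idx → Prop
  | Idx.L _ m _ => 0 ≤ m
  | Idx.J _ n => 1 ≤ n

/-- The Lie subalgebra `A₊(p)`: the ℂ-span of `{L_{i,m} : i ≥ 0, m ≥ 0} ∪ {J_{i,n} : i ≥ 0, n ≥ 1}`. -/
noncomputable def Aplus : Submodule ℂ (Idx →₀ ℂ) :=
  Submodule.span ℂ {x : Idx →₀ ℂ | ∃ a : Idx, inPlus a ∧ x = e a}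

/-- The predicate picking out the basis vectors of `I(k,N)` (among the basis
vectors of `A₊(p)`): `L_{i,m}` with `m ≥ 0` and (`i > k` or `m > N`), and
`J_{i,n}` with `n ≥ 1` and (`i > k` or `n > N+1`). -/
def inI (k N : ℕ) : Idx → Prop
  | Idx.L i m _ => 0 ≤ m ∧ (k < i ∨ (N : ℤ) < m)
  | Idx.J i n => 1 ≤ n ∧ (k < i ∨ N + 1 < n)

/-- The ℂ-span `I(k,N)` of the basis vectors `L_{i,m}` with (`i > k` or `m > N`)
together with the `J_{i,n}` with (`i > k` or `n > N+1`). -/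
noncomputable def Ikn (k N : ℕ) : Submodule ℂ (Idx →₀ ℂ) :=
  Submodule.span ℂ {x : Idx →₀ ℂ | ∃ a : Idx, inI k N a ∧ x = e a}

/-- The predicate picking out the basis vectors `{L_{i,N} : 0 ≤ i ≤ k} ∪ {J_{i,N+1} : 0 ≤ i ≤ k}`
spanning the (even part of the) column ideal `𝔠(k,N)`. -/
def inCol (k N : ℕ) : Idx → Prop
  | Idx.L i m _ => i ≤ k ∧ m = (N : ℤ)
  | Idx.J i n => i ≤ k ∧ n = N + 1

/-- The ℂ-span of `{L_{i,N} : 0 ≤ i ≤ k} ∪ {J_{i,N+1} : 0 ≤ i ≤ k}`. -/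
noncomputable def colSpan (k N : ℕ) : Submodule ℂ (Idx →₀ ℂ) :=
  Submodule.span ℂ {x : Idx →₀ ℂ | ∃ a : Idx, inCol k N a ∧ x = e a}


section Aux

open Submodule

lemma single_mem_span (P : Idx → Prop) {a : Idx} (c : ℂ) (ha : P a) :
    Finsupp.single a c ∈ Submodule.span ℂ {x : Idx →₀ ℂ | ∃ b : Idx, P b ∧ x = e b} := by
  have h : Finsupp.single a c = c • e a := by simp [e]
  rw [h]
  exact Submodule.smul_mem _ _ (Submodule.subset_span ⟨a, ha, rfl⟩)

lemma str_antisymm (p : ℂ) (a b : Idx) : str p b a = - str p a b := by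
  cases a with
  | L i m hm =>
    cases b with
    | L j n hn =>
      show strLL p j n i m = - strLL p i m j n
      unfold strLL
      rw [add_comm (n : ℤ) m, Nat.add_comm j i]
      split
      · rw [← Finsupp.single_neg]
        congr 1
        ring
      · simp
    | J j n => rfl
  | J i m =>
    cases b with
    | L j n hn => simp [str]
    | J j n => simp [str]

lemma br_e_e (p : ℂ) (a b : Idx) : br p (e a) (e b) = str p a b := by
  unfold br e
  rw [Finsupp.sum_single_index, Finsupp.sum_single_index]
  · simp
  · simp
  · simp [Finsupp.sum_single_index]

lemma br_zero_left (p : ℂ) (y : Idx →₀ ℂ) : br p 0 y = 0 := by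
  simp [br]

lemma br_zero_right (p : ℂ) (x : Idx →₀ ℂ) : br p x 0 = 0 := by
  simp [br]

lemma br_add_left (p : ℂ) (x x' y : Idx →₀ ℂ) :
    br p (x + x') y = br p x y + br p x' y := by
  unfold br
  rw [Finsupp.sum_add_index']
  · intro a; simp
  · intro a c c'
    rw [← Finsupp.sum_add]
    congr 1
    ext b cb
    rw [add_mul, add_smul]

lemma br_add_right (p : ℂ) (x y y' : Idx →₀ ℂ) :
    br p x (y + y') = br p x y + br p x y' := by
  unfold br
  rw [← Finsupp.sum_add]
  congr 1
  ext a ca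
  rw [Finsupp.sum_add_index']
  · intro b; simp
  · intro b c c'
    rw [mul_add, add_smul]

lemma br_smul_left (p : ℂ) (c : ℂ) (x y : Idx →₀ ℂ) :
    br p (c • x) y = c • br p x y := by
  unfold br
  rw [Finsupp.sum_smul_index', Finsupp.smul_sum]
  · refine Finsupp.sum_congr fun a _ => ?_
    rw [Finsupp.smul_sum]
    refine Finsupp.sum_congr fun b _ => ?_
    rw [smul_eq_mul, mul_assoc, mul_smul]
  · intro a; simp

lemma br_smul_right (p : ℂ) (c : ℂ) (x y : Idx →₀ ℂ) :
    br p x (c • y) = c • br p x y := by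
  unfold br
  rw [Finsupp.smul_sum]
  refine Finsupp.sum_congr fun a _ => ?_
  rw [Finsupp.sum_smul_index', Finsupp.smul_sum]
  · refine Finsupp.sum_congr fun b _ => ?_
    rw [smul_eq_mul, show ∀ ca cb : ℂ, ca * (c * cb) = c * (ca * cb) from fun _ _ => by ring, mul_smul]
  · intro b; simp

lemma br_mem_span {p : ℂ} {S T : Set (Idx →₀ ℂ)} {M : Submodule ℂ (Idx →₀ ℂ)}
    (h : ∀ x ∈ S, ∀ y ∈ T, br p x y ∈ M) :
    ∀ x ∈ Submodule.span ℂ S, ∀ y ∈ Submodule.span ℂ T, br p x y ∈ M := by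
  intro x hx
  induction hx using Submodule.span_induction with
  | mem x hxS =>
    intro y hy
    induction hy using Submodule.span_induction with
    | mem y hyT => exact h x hxS y hyT
    | zero => rw [br_zero_right]; exact M.zero_mem
    | add y y' _ _ ihy ihy' => rw [br_add_right]; exact M.add_mem ihy ihy'
    | smul c y _ ihy => rw [br_smul_right]; exact M.smul_mem c ihy
  | zero => intro y hy; rw [br_zero_left]; exact M.zero_mem
  | add x x' _ _ ihx ihx' =>
    intro y hy
    rw [br_add_left]; exact M.add_mem (ihx y hy) (ihx' y hy)
  | smul c x _ ihx =>
    intro y hy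
    rw [br_smul_left]; exact M.smul_mem c (ihx y hy)

lemma inI_inPlus {k N : ℕ} {a : Idx} (h : inI k N a) : inPlus a := by
  cases a <;> exact h.1

lemma inCol_inPlus {k N : ℕ} {a : Idx} (h : inCol k N a) : inPlus a := by
  cases a with
  | L i m hm =>
    have h2 := h.2
    show 0 ≤ m
    omega
  | J i n =>
    have h2 := h.2
    show 1 ≤ n
    omega

/-- core: bracket of a plus basis vector with an `I(k,N)` basis vector lands in `I(k,N)`. -/
lemma str_plus_I {p : ℂ} {k N : ℕ} {a b : Idx} (ha : inPlus a) (hb : inI k N b) :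
    str p a b ∈ Ikn k N := by
  cases a with
  | L i m hm =>
    cases b with
    | L j n hn =>
      show strLL p i m j n ∈ _
      unfold strLL
      have hm0 : 0 ≤ m := ha
      obtain ⟨hn0, hjn⟩ := hb
      split
      · exact single_mem_span _ _ ⟨by omega, by omega⟩
      · exact (Ikn k N).zero_mem
    | J j n =>
      show strLJ p i m j n ∈ _
      unfold strLJ
      have hm0 : 0 ≤ m := ha
      obtain ⟨hn0, hjn⟩ := hb
      split
      · exact single_mem_span _ _ ⟨by omega, by omega⟩
      · exact (Ikn k N).zero_mem
  | J i n =>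
    cases b with
    | L j m hm =>
      show -strLJ p j m i n ∈ _
      have hn0 : 1 ≤ n := ha
      obtain ⟨hm0, hjm⟩ := hb
      refine (Ikn k N).neg_mem ?_
      unfold strLJ
      split
      · exact single_mem_span _ _ ⟨by omega, by omega⟩
      · exact (Ikn k N).zero_mem
    | J j m => exact (Ikn k N).zero_mem

/-- bracket of a plus basis vector with a column basis vector lands in `colSpan ⊔ Ikn`. -/
lemma str_plus_col {p : ℂ} {k N : ℕ} {a b : Idx} (ha : inPlus a) (hb : inCol k N b) :
    str p a b ∈ colSpan k N ⊔ Ikn k N := by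
  cases a with
  | L i m hm =>
    cases b with
    | L j n hn =>
      obtain ⟨hjk, hnN⟩ := hb
      show strLL p i m j n ∈ _
      have hm0 : 0 ≤ m := ha
      unfold strLL
      split
      · by_cases hcase : i + j ≤ k ∧ m = 0
        · exact Submodule.mem_sup_left (single_mem_span _ _ ⟨hcase.1, by omega⟩)
        · exact Submodule.mem_sup_right (single_mem_span _ _ ⟨by omega, by omega⟩)
      · exact Submodule.zero_mem _
    | J j n =>
      obtain ⟨hjk, hnN⟩ := hb
      show strLJ p i m j n ∈ _
      have hm0 : 0 ≤ m := ha
      unfold strLJ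
      split
      · by_cases hcase : i + j ≤ k ∧ m = 0
        · exact Submodule.mem_sup_left (single_mem_span _ _ ⟨hcase.1, by omega⟩)
        · exact Submodule.mem_sup_right (single_mem_span _ _ ⟨by omega, by omega⟩)
      · exact Submodule.zero_mem _
  | J i n =>
    cases b with
    | L j m hm =>
      obtain ⟨hjk, hmN⟩ := hb
      show -strLJ p j m i n ∈ _
      have hn1 : 1 ≤ n := ha
      refine Submodule.neg_mem _ ?_
      unfold strLJ
      split
      · by_cases hcase : i + j ≤ k ∧ n = 1
        · exact Submodule.mem_sup_left (single_mem_span _ _ ⟨by omega, by omega⟩)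
        · exact Submodule.mem_sup_right (single_mem_span _ _ ⟨by omega, by omega⟩)
      · exact Submodule.zero_mem _
    | J j m => exact Submodule.zero_mem _

/-- bracket of two column basis vectors lands in `I(k,N)` (uses `N ≥ 1`). -/
lemma str_col_col {p : ℂ} {k N : ℕ} (hN : 1 ≤ N) {a b : Idx}
    (ha : inCol k N a) (hb : inCol k N b) :
    str p a b ∈ Ikn k N := by
  cases a with
  | L i m hm =>
    cases b with
    | L j n hn =>
      obtain ⟨_, hmN⟩ := ha
      obtain ⟨_, hnN⟩ := hb
      show strLL p i m j n ∈ _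
      unfold strLL
      split
      · exact single_mem_span _ _ ⟨by omega, by omega⟩
      · exact (Ikn k N).zero_mem
    | J j n =>
      obtain ⟨_, hmN⟩ := ha
      obtain ⟨_, hnN⟩ := hb
      show strLJ p i m j n ∈ _
      unfold strLJ
      split
      · exact single_mem_span _ _ ⟨by omega, by omega⟩
      · exact (Ikn k N).zero_mem
  | J i n =>
    cases b with
    | L j m hm =>
      obtain ⟨_, hnN⟩ := ha
      obtain ⟨_, hmN⟩ := hb
      show -strLJ p j m i n ∈ _
      refine (Ikn k N).neg_mem ?_
      unfold strLJ
      split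
      · exact single_mem_span _ _ ⟨by omega, by omega⟩
      · exact (Ikn k N).zero_mem
    | J j m => exact (Ikn k N).zero_mem

end Aux

/-- For nonzero `p ∈ ℂ` and integers `k ≥ 0`, `N ≥ 1`: in the quotient Lie algebra
`g(k,N) = A₊(p)/I(k,N)`, the image of the span of
`{L_{i,N} : 0 ≤ i ≤ k} ∪ {J_{i,N+1} : 0 ≤ i ≤ k}` is an abelian Lie ideal.
Stated upstairs: the preimage `colSpan k N ⊔ Ikn k N` is bracket-stable under
`A₊(p)` (so its image is an ideal of the quotient), and the bracket of any two
of its elements lies in `I(k,N)` (so the image is abelian). -/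
theorem col_ideal_abelian (p : ℂ) (hp : p ≠ 0) (k N : ℕ) (hN : 1 ≤ N) :
    (∀ x ∈ Aplus, ∀ y ∈ colSpan k N ⊔ Ikn k N,
      br p x y ∈ colSpan k N ⊔ Ikn k N ∧ br p y x ∈ colSpan k N ⊔ Ikn k N) ∧
    (∀ y ∈ colSpan k N ⊔ Ikn k N, ∀ z ∈ colSpan k N ⊔ Ikn k N,
      br p y z ∈ Ikn k N) := by
  classical
  -- generator sets
  set SP : Set (Idx →₀ ℂ) := {x : Idx →₀ ℂ | ∃ a : Idx, inPlus a ∧ x = e a} with hSP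
  set SM : Set (Idx →₀ ℂ) :=
    {x : Idx →₀ ℂ | ∃ a : Idx, (inCol k N a ∨ inI k N a) ∧ x = e a} with hSM
  have hsup : colSpan k N ⊔ Ikn k N = Submodule.span ℂ SM := by
    rw [colSpan, Ikn, ← Submodule.span_union]
    congr 1
    ext x
    constructor
    · rintro (⟨a, ha, rfl⟩ | ⟨a, ha, rfl⟩)
      · exact ⟨a, Or.inl ha, rfl⟩
      · exact ⟨a, Or.inr ha, rfl⟩
    · rintro ⟨a, (ha | ha), rfl⟩
      · exact Or.inl ⟨a, ha, rfl⟩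
      · exact Or.inr ⟨a, ha, rfl⟩
  have hIle : Ikn k N ≤ colSpan k N ⊔ Ikn k N := le_sup_right
  -- generator-level facts
  have gen1 : ∀ x ∈ SP, ∀ y ∈ SM, br p x y ∈ colSpan k N ⊔ Ikn k N := by
    rintro _ ⟨a, ha, rfl⟩ _ ⟨b, hb, rfl⟩
    rw [br_e_e]
    rcases hb with hb | hb
    · exact str_plus_col ha hb
    · exact hIle (str_plus_I ha hb)
  have gen1' : ∀ y ∈ SM, ∀ x ∈ SP, br p y x ∈ colSpan k N ⊔ Ikn k N := by
    rintro _ ⟨b, hb, rfl⟩ _ ⟨a, ha, rfl⟩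
    rw [br_e_e, str_antisymm]
    refine Submodule.neg_mem _ ?_
    rcases hb with hb | hb
    · exact str_plus_col ha hb
    · exact hIle (str_plus_I ha hb)
  have gen2 : ∀ y ∈ SM, ∀ z ∈ SM, br p y z ∈ Ikn k N := by
    rintro _ ⟨a, ha, rfl⟩ _ ⟨b, hb, rfl⟩
    rw [br_e_e]
    rcases hb with hb | hb
    · rcases ha with ha | ha
      · exact str_col_col hN ha hb
      · rw [str_antisymm]
        exact (Ikn k N).neg_mem (str_plus_I (inCol_inPlus hb) ha)
    · exact str_plus_I (Or.elim ha inCol_inPlus inI_inPlus) hb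
  constructor
  · intro x hx y hy
    rw [hsup] at hy
    have hx' : x ∈ Submodule.span ℂ SP := hx
    exact ⟨br_mem_span gen1 x hx' y hy, br_mem_span gen1' y hy x hx'⟩
  · intro y hy z hz
    rw [hsup] at hy hz
    exact br_mem_span gen2 y hy z hz


end Stmt7
end

section
/- Fix a nonzero p ∈ ℂ and integers k ≥ 1 and N ≥ 0, and suppose k = p·(N+1) as complex numbers. Then the image of J_{k,N+1} in the quotient Lie algebra g(k,N) = A₊(p)/I(k,N) is a central element: its bracket with every element of g(k,N) is zero. -/
namespace Stmt8

/-- Index set for the basis `{L_{i,m} : i ∈ ℕ, m ∈ ℤ, m ≥ −1} ∪ {J_{i,n} : i, n ∈ ℕ}`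
of the Lie algebra `A(p)`. -/
inductive Idx : Type where
  | L : (i : ℕ) → (m : ℤ) → -1 ≤ m → Idx
  | J : ℕ → ℕ → Idx

/-- `[L_{i,m}, L_{j,n}] = ((j+p)(m+1) − (i+p)(n+1))·L_{i+j,m+n}`,
read as `0` when `m+n < −1`. -/
noncomputable def strLL (p : ℂ) (i : ℕ) (m : ℤ) (j : ℕ) (n : ℤ) : Idx →₀ ℂ :=
  if h : -1 ≤ m + n then
    Finsupp.single (Idx.L (i + j) (m + n) h)
      (((j : ℂ) + p) * ((m : ℂ) + 1) - ((i : ℂ) + p) * ((n : ℂ) + 1))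
  else 0

/-- `[L_{i,m}, J_{j,n}] = (j(m+1) − (i+p)n)·J_{i+j,m+n}`, read as `0` when `m+n < 0`. -/
noncomputable def strLJ (p : ℂ) (i : ℕ) (m : ℤ) (j : ℕ) (n : ℕ) : Idx →₀ ℂ :=
  if 0 ≤ m + (n : ℤ) then
    Finsupp.single (Idx.J (i + j) (m + (n : ℤ)).toNat)
      ((j : ℂ) * ((m : ℂ) + 1) - ((i : ℂ) + p) * (n : ℂ))
  else 0

/-- The structure constants of `A(p)` on basis vectors. -/
noncomputable def str (p : ℂ) : Idx → Idx → (Idx →₀ ℂ)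
  | Idx.L i m _, Idx.L j n _ => strLL p i m j n
  | Idx.L i m _, Idx.J j n => strLJ p i m j n
  | Idx.J j n, Idx.L i m _ => -strLJ p i m j n
  | Idx.J _ _, Idx.J _ _ => 0

/-- The Lie bracket of `A(p)`: the ℂ-bilinear extension of the structure constants
to the free ℂ-module `Idx →₀ ℂ`. -/
noncomputable def br (p : ℂ) (x y : Idx →₀ ℂ) : Idx →₀ ℂ :=
  x.sum fun a ca => y.sum fun b cb => (ca * cb) • str p a b

/-- The basis vector attached to an index. -/
noncomputable def e (a : Idx) : Idx →₀ ℂ := Finsupp.single a 1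

/-- The predicate picking out the basis vectors of `A₊(p)`:
`L_{i,m}` with `m ≥ 0` and `J_{i,n}` with `n ≥ 1`. -/
def inPlus : Idx → Prop
  | Idx.L _ m _ => 0 ≤ m
  | Idx.J _ n => 1 ≤ n

/-- The Lie subalgebra `A₊(p)`: the ℂ-span of `{L_{i,m} : i ≥ 0, m ≥ 0} ∪ {J_{i,n} : i ≥ 0, n ≥ 1}`. -/
noncomputable def Aplus : Submodule ℂ (Idx →₀ ℂ) :=
  Submodule.span ℂ {x : Idx →₀ ℂ | ∃ a : Idx, inPlus a ∧ x = e a}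

/-- The predicate picking out the basis vectors of `I(k,N)` (among the basis
vectors of `A₊(p)`): `L_{i,m}` with `m ≥ 0` and (`i > k` or `m > N`), and
`J_{i,n}` with `n ≥ 1` and (`i > k` or `n > N+1`). -/
def inI (k N : ℕ) : Idx → Prop
  | Idx.L i m _ => 0 ≤ m ∧ (k < i ∨ (N : ℤ) < m)
  | Idx.J i n => 1 ≤ n ∧ (k < i ∨ N + 1 < n)

/-- The ℂ-span `I(k,N)` of the basis vectors `L_{i,m}` with (`i > k` or `m > N`)
together with the `J_{i,n}` with (`i > k` or `n > N+1`). -/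
noncomputable def Ikn (k N : ℕ) : Submodule ℂ (Idx →₀ ℂ) :=
  Submodule.span ℂ {x : Idx →₀ ℂ | ∃ a : Idx, inI k N a ∧ x = e a}


lemma single_mem_Ikn {k N : ℕ} {a : Idx} (h : inI k N a) (c : ℂ) :
    Finsupp.single a c ∈ Ikn k N := by
  have : Finsupp.single a c = c • e a := by simp [e, Finsupp.smul_single]
  rw [this]
  exact Submodule.smul_mem _ _ (Submodule.subset_span ⟨a, h, rfl⟩)

lemma strLJ_mem (p : ℂ) (k N : ℕ) (hk : 1 ≤ k)
    (hkp : (k : ℂ) = p * ((N : ℂ) + 1)) (i : ℕ) (m : ℤ) (hm : 0 ≤ m) :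
    strLJ p i m k (N + 1) ∈ Ikn k N := by
  simp only [strLJ]
  rw [if_pos (by push_cast; omega)]
  rcases Nat.eq_zero_or_pos i with hi | hi
  · subst hi
    rcases eq_or_lt_of_le hm with hm0 | hm0
    · have hc : (k : ℂ) * ((m : ℂ) + 1) - (((0:ℕ) : ℂ) + p) * ((N + 1 : ℕ) : ℂ) = 0 := by
        rw [← hm0]
        push_cast
        linear_combination hkp
      rw [hc, Finsupp.single_zero]
      exact zero_mem _
    · refine single_mem_Ikn ?_ _
      exact ⟨by omega, Or.inr (by omega)⟩
  · refine single_mem_Ikn ?_ _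
    exact ⟨by omega, Or.inl (by omega)⟩

lemma key_right (p : ℂ) (k N : ℕ) (hk : 1 ≤ k)
    (hkp : (k : ℂ) = p * ((N : ℂ) + 1)) :
    ∀ a : Idx, inPlus a → str p a (Idx.J k (N + 1)) ∈ Ikn k N := by
  intro a ha
  match a with
  | Idx.J j n => simp only [str]; exact zero_mem _
  | Idx.L i m hm =>
    simp only [inPlus] at ha
    exact strLJ_mem p k N hk hkp i m ha

lemma key_left (p : ℂ) (k N : ℕ) (hk : 1 ≤ k)
    (hkp : (k : ℂ) = p * ((N : ℂ) + 1)) :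
    ∀ a : Idx, inPlus a → str p (Idx.J k (N + 1)) a ∈ Ikn k N := by
  intro a ha
  match a with
  | Idx.J j n => simp only [str]; exact zero_mem _
  | Idx.L i m hm =>
    simp only [inPlus] at ha
    simp only [str]
    exact neg_mem (strLJ_mem p k N hk hkp i m ha)

lemma br_single_right (p : ℂ) (x : Idx →₀ ℂ) (b : Idx) :
    br p x (e b) = Finsupp.linearCombination ℂ (fun a => str p a b) x := by
  simp only [br, e, Finsupp.linearCombination_apply]
  refine Finsupp.sum_congr fun a _ => ?_
  rw [Finsupp.sum_single_index (by simp), mul_one]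

lemma br_single_left (p : ℂ) (x : Idx →₀ ℂ) (b : Idx) :
    br p (e b) x = Finsupp.linearCombination ℂ (fun a => str p b a) x := by
  simp only [br, e, Finsupp.linearCombination_apply]
  rw [Finsupp.sum_single_index (by simp)]
  refine Finsupp.sum_congr fun a _ => ?_
  rw [one_mul]

/-- Fix nonzero `p ∈ ℂ` and integers `k ≥ 1`, `N ≥ 0` with `k = p·(N+1)` in ℂ.
Then the image of `J_{k,N+1}` in the quotient Lie algebra `g(k,N) = A₊(p)/I(k,N)`
is central: its bracket with every element of `A₊(p)` lies in `I(k,N)`. -/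
theorem J_central (p : ℂ) (hp : p ≠ 0) (k N : ℕ) (hk : 1 ≤ k)
    (hkp : (k : ℂ) = p * ((N : ℂ) + 1)) :
    ∀ x ∈ Aplus,
      br p x (e (Idx.J k (N + 1))) ∈ Ikn k N ∧
      br p (e (Idx.J k (N + 1))) x ∈ Ikn k N := by
  have hle1 : Aplus ≤ (Ikn k N).comap (Finsupp.linearCombination ℂ
      (fun a => str p a (Idx.J k (N + 1)))) := by
    rw [Aplus, Submodule.span_le]
    rintro x ⟨a, ha, rfl⟩
    simp only [SetLike.mem_coe, Submodule.mem_comap, e]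
    rw [Finsupp.linearCombination_single, one_smul]
    exact key_right p k N hk hkp a ha
  have hle2 : Aplus ≤ (Ikn k N).comap (Finsupp.linearCombination ℂ
      (fun a => str p (Idx.J k (N + 1)) a)) := by
    rw [Aplus, Submodule.span_le]
    rintro x ⟨a, ha, rfl⟩
    simp only [SetLike.mem_coe, Submodule.mem_comap, e]
    rw [Finsupp.linearCombination_single, one_smul]
    exact key_left p k N hk hkp a ha
  intro x hx
  constructor
  · rw [br_single_right]
    exact hle1 hx
  · rw [br_single_left]
    exact hle2 hx


end Stmt8
end

section
/- Let p, k ∈ ℂ with p ≠ 0, and let a ∈ ℂ[X] be a polynomial such that (p·μ − (k+p)·λ)·a(λ+μ) = p·μ·a(μ) for all λ, μ ∈ ℂ. If k + p ≠ 0 then a = 0. If k + p = 0 then a is a constant polynomial. -/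
/-! Specialising the equation at `μ = 0` gives `(k + p) λ a(λ) = 0`, so for `k + p ≠ 0` the
polynomial `a` vanishes at every `λ ≠ 0`, hence is zero. For `k + p = 0` the specialisation
`μ = 1` gives `p a(λ + 1) = p a(1)`, so `a` is the constant `a(1)`. -/

theorem Polynomial.eq_zero_of_forall_ne_eval_eq_zero {R : Type*} [CommRing R] [IsDomain R]
    [Infinite R] (a : Polynomial R) (x₀ : R) (h : ∀ x, x ≠ x₀ → a.eval x = 0) : a = 0 :=
  a.eq_zero_of_infinite_isRoot <| (Set.finite_singleton x₀).infinite_compl.mono h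

/-- Let `p, k ∈ ℂ` with `p ≠ 0`, and let `a ∈ ℂ[X]` be a polynomial such that
`(p·μ − (k+p)·λ)·a(λ+μ) = p·μ·a(μ)` for all `λ, μ ∈ ℂ`. If `k + p ≠ 0` then `a = 0`.
If `k + p = 0` then `a` is a constant polynomial. -/
theorem functional_equation_rank_one (p k : ℂ) (hp : p ≠ 0) (a : Polynomial ℂ)
    (ha : ∀ l m : ℂ, (p * m - (k + p) * l) * a.eval (l + m) = p * m * a.eval m) :
    (k + p ≠ 0 → a = 0) ∧ (k + p = 0 → ∃ c : ℂ, a = Polynomial.C c) := by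
  constructor
  · intro hkp
    refine a.eq_zero_of_forall_ne_eval_eq_zero 0 fun l hl => ?_
    have h := ha l 0
    simp only [mul_zero, zero_sub, add_zero, zero_mul, neg_eq_zero, mul_eq_zero] at h
    exact h.resolve_left (not_or_intro hkp hl)
  · intro hkp
    refine ⟨a.eval 1, Polynomial.funext fun x => ?_⟩
    have h := ha (x - 1) 1
    rw [hkp, zero_mul, sub_zero, sub_add_cancel, mul_one] at h
    simpa using mul_left_cancel₀ hp h
end

section
/- Let a ∈ ℂ[X,Y] be a two-variable polynomial such that a(x,y)·a(x+y,z) = a(x,z)·a(x+z,y) for all x, y, z ∈ ℂ. Then a is independent of its first variable: there exists b ∈ ℂ[Y] with a(x,y) = b(y) for all x, y ∈ ℂ. -/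
open MvPolynomial

open Polynomial in
noncomputable def toQ (a : MvPolynomial (Fin 2) ℂ) : Polynomial (Polynomial ℂ) :=
  MvPolynomial.eval₂ (Polynomial.C.comp Polynomial.C) ![Polynomial.X, Polynomial.C Polynomial.X] a

open Polynomial in
lemma toQ_eval (a : MvPolynomial (Fin 2) ℂ) (x y : ℂ) :
    ((toQ a).map (Polynomial.evalRingHom y)).eval x = MvPolynomial.eval ![x, y] a := by
  induction a using MvPolynomial.induction_on with
  | C c => simp [toQ]
  | add p q hp hq => simp only [toQ, MvPolynomial.eval₂_add, Polynomial.map_add,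
      Polynomial.eval_add, map_add] at *; rw [hp, hq]
  | mul_X p i hp =>
    simp only [toQ, MvPolynomial.eval₂_mul, Polynomial.map_mul, Polynomial.eval_mul,
      map_mul, MvPolynomial.eval₂_X] at *
    rw [hp]
    fin_cases i <;> simp

open Polynomial in
lemma nextCoeff_comp_X_add_C {Q : Polynomial ℂ} (hQ : Q.Monic) (hn : 0 < Q.natDegree) (r : ℂ) :
    (Q.comp (Polynomial.X + Polynomial.C r)).nextCoeff = Q.nextCoeff + Q.natDegree * r := by
  rw [← taylor_apply, nextCoeff_of_natDegree_pos (by rw [natDegree_taylor]; exact hn),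
      natDegree_taylor, taylor_coeff]
  have hd : (hasseDeriv (Q.natDegree - 1) Q).natDegree < 2 :=
    lt_of_le_of_lt (natDegree_hasseDeriv_le Q (Q.natDegree - 1)) (by omega)
  rw [eval_eq_sum_range' hd]
  rw [Finset.sum_range_succ, Finset.sum_range_one]
  rw [hasseDeriv_coeff, hasseDeriv_coeff]
  have e0 : 0 + (Q.natDegree - 1) = Q.natDegree - 1 := by omega
  have e1 : 1 + (Q.natDegree - 1) = Q.natDegree := by omega
  rw [e0, e1, Nat.choose_self, hQ.coeff_natDegree, Nat.choose_symm (by omega)]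
  rw [Nat.choose_one_right, nextCoeff_of_natDegree_pos hn]
  push_cast
  ring

/-- Let `a ∈ ℂ[X,Y]` be a two-variable polynomial such that
`a(x,y)·a(x+y,z) = a(x,z)·a(x+z,y)` for all `x, y, z ∈ ℂ`. Then `a` is independent
of its first variable: there exists `b ∈ ℂ[Y]` with `a(x,y) = b(y)` for all `x, y`. -/
theorem independent_of_first_variable (a : MvPolynomial (Fin 2) ℂ)
    (ha : ∀ x y z : ℂ,
      eval ![x, y] a * eval ![x + y, z] a = eval ![x, z] a * eval ![x + z, y] a) :
    ∃ b : Polynomial ℂ, ∀ x y : ℂ, eval ![x, y] a = b.eval y := by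
  classical
  set q := toQ a with hqdef
  rcases Nat.eq_zero_or_pos q.natDegree with hn | hn
  · refine ⟨q.coeff 0, fun x y => ?_⟩
    rw [← toQ_eval a x y, ← hqdef, Polynomial.eq_C_of_natDegree_eq_zero hn]
    simp
  · exfalso
    have hq0 : q ≠ 0 := fun h => by simp [h] at hn
    have hlc : q.leadingCoeff ≠ 0 := Polynomial.leadingCoeff_ne_zero.2 hq0
    have hfin : Set.Finite {w : ℂ | q.leadingCoeff.IsRoot w} :=
      Polynomial.finite_setOf_isRoot hlc
    have hinf : Set.Infinite {w : ℂ | q.leadingCoeff.IsRoot w}ᶜ := hfin.infinite_compl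
    obtain ⟨y, hy⟩ := hinf.nonempty
    obtain ⟨z, hz⟩ := (hinf.diff (Set.finite_singleton y)).nonempty
    have hzy : z ≠ y := hz.2
    have hz : z ∈ {w : ℂ | q.leadingCoeff.IsRoot w}ᶜ := hz.1
    simp only [Set.mem_compl_iff, Set.mem_setOf_eq, Polynomial.IsRoot] at hy hz
    set A : ℂ → Polynomial ℂ := fun w => q.map (Polynomial.evalRingHom w) with hA
    have hylc : (Polynomial.evalRingHom y) q.leadingCoeff ≠ 0 := hy
    have hzlc : (Polynomial.evalRingHom z) q.leadingCoeff ≠ 0 := hz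
    have hAy : (A y).leadingCoeff ≠ 0 := by
      rw [hA, Polynomial.leadingCoeff_map_of_leadingCoeff_ne_zero _ hylc]; exact hylc
    have hAz : (A z).leadingCoeff ≠ 0 := by
      rw [hA, Polynomial.leadingCoeff_map_of_leadingCoeff_ne_zero _ hzlc]; exact hzlc
    have hdy : (A y).natDegree = q.natDegree :=
      Polynomial.natDegree_map_of_leadingCoeff_ne_zero _ hylc
    have hdz : (A z).natDegree = q.natDegree :=
      Polynomial.natDegree_map_of_leadingCoeff_ne_zero _ hzlc
    have key : ∀ w v : ℂ,
        A w * ((A v).comp (Polynomial.X + Polynomial.C w)) =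
        A v * ((A w).comp (Polynomial.X + Polynomial.C v)) := by
      intro w v
      apply Polynomial.funext
      intro x
      simp only [Polynomial.eval_mul, Polynomial.eval_comp, Polynomial.eval_add,
        Polynomial.eval_X, Polynomial.eval_C, hA, hqdef, toQ_eval]
      exact ha x w v
    set P := A y * Polynomial.C (A y).leadingCoeff⁻¹ with hP
    set Q := A z * Polynomial.C (A z).leadingCoeff⁻¹ with hQ
    have hPm : P.Monic := Polynomial.monic_mul_leadingCoeff_inv
      (Polynomial.leadingCoeff_ne_zero.mp hAy)
    have hQm : Q.Monic := Polynomial.monic_mul_leadingCoeff_inv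
      (Polynomial.leadingCoeff_ne_zero.mp hAz)
    have hPd : P.natDegree = q.natDegree := by
      rw [hP, Polynomial.natDegree_mul_C (inv_ne_zero hAy), hdy]
    have hQd : Q.natDegree = q.natDegree := by
      rw [hQ, Polynomial.natDegree_mul_C (inv_ne_zero hAz), hdz]
    have hE : P * (Q.comp (Polynomial.X + Polynomial.C y)) =
        Q * (P.comp (Polynomial.X + Polynomial.C z)) := by
      simp only [hP, hQ, Polynomial.mul_comp, Polynomial.C_comp]
      linear_combination
        (Polynomial.C (A y).leadingCoeff⁻¹ * Polynomial.C (A z).leadingCoeff⁻¹) * key y z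
    have hnc := congrArg Polynomial.nextCoeff hE
    rw [hPm.nextCoeff_mul (hQm.comp_X_add_C y), hQm.nextCoeff_mul (hPm.comp_X_add_C z),
      nextCoeff_comp_X_add_C hQm (by omega) y, nextCoeff_comp_X_add_C hPm (by omega) z,
      hPd, hQd] at hnc
    have hyz : (q.natDegree : ℂ) * y = q.natDegree * z := by linear_combination hnc
    exact hzy (mul_left_cancel₀ (Nat.cast_ne_zero.mpr (by omega)) hyz).symm
end

section
/- Let p, α, Δ, Λ ∈ ℂ with p ≠ 0, and let k be a positive integer. Suppose c ∈ ℂ[X,Y] satisfies, for all ∂, λ ∈ ℂ: (i) (Λ+1)·c(∂+λ, 0) − Λ·c(∂, 0) = c(∂, λ), and (ii) p·(∂ + Δλ + α)·(c(∂+λ, 0) − c(∂, 0)) + (p/2)·λ·c(∂+λ, 0) = (k + p/2)·λ·c(∂, λ). Then either c = 0, or else k = p, Δ = (3/2)Λ + 1, and there exists γ ∈ ℂ with γ ≠ 0 such that c(∂, λ) = γ·(∂ + (Λ+1)λ + α) for all ∂, λ ∈ ℂ. -/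
open MvPolynomial

/-!
Put `r(y) = c(y - α, 0)`. Hypothesis (i) expresses `c` through `r`, and then (ii) becomes a
relation for `r` alone. Its coefficient of `λ` is the Euler equation `p y r' = k r`, whose
nonzero polynomial solutions are `γ yⁿ` with `p n = k`, so `n ≥ 1`. Evaluating the relation at
`(y, λ) = (0, 1)` and `(-1, 1)` gives `p (Δ + 1/2) = (k + p/2)(Λ + 1)` and
`p (Δ - 1) = (k + p/2) Λ`; their difference is `k = p`, whence `n = 1` and `Δ = 3/2 Λ + 1`.
-/

namespace Polynomial

theorem coeff_X_mul_derivative {R : Type*} [Semiring R] (r : R[X]) (i : ℕ) :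
    (X * derivative r).coeff i = i * r.coeff i := by
  cases i with
  | zero => simp
  | succ i => rw [coeff_X_mul, coeff_derivative, ← Nat.cast_succ, Nat.cast_comm]

section Euler

variable {K : Type*} [Field K] {r : K[X]} {μ : K}

theorem natDegree_eq_of_X_mul_derivative_eq (hr : r ≠ 0) (h : X * derivative r = C μ * r) :
    (r.natDegree : K) = μ := by
  have hlead := congrArg (coeff · r.natDegree) h
  simp only [coeff_X_mul_derivative, coeff_C_mul] at hlead
  exact mul_right_cancel₀ (leadingCoeff_ne_zero.mpr hr) hlead

theorem eq_C_leadingCoeff_mul_X_pow_of_X_mul_derivative_eq [CharZero K]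
    (h : X * derivative r = C μ * r) : r = C r.leadingCoeff * X ^ r.natDegree := by
  rcases eq_or_ne r 0 with rfl | hr
  · simp
  have hμ := natDegree_eq_of_X_mul_derivative_eq hr h
  ext i
  rw [coeff_C_mul_X_pow]
  split_ifs with hi
  · rw [hi, leadingCoeff]
  · have hcoeff := congrArg (coeff · i) h
    simp only [coeff_X_mul_derivative, coeff_C_mul, ← hμ] at hcoeff
    have hne : (i : K) - r.natDegree ≠ 0 := sub_ne_zero.mpr (Nat.cast_injective.ne hi)
    exact (mul_eq_zero.mp (by linear_combination hcoeff)).resolve_left hne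

end Euler

theorem eval_mvPolynomial_aeval {R σ : Type*} [CommRing R] (f : σ → R[X])
    (c : MvPolynomial σ R) (y : R) :
    eval y (MvPolynomial.aeval f c) = MvPolynomial.eval (fun i => (f i).eval y) c := by
  rw [← coe_aeval_eq_eval, comp_aeval_apply]
  rfl

/-- Hypothesis (ii) with (i) substituted, in the variable `y = ∂ + α`, for `r(y) = c(y - α, 0)`
and `κ = k`. -/
def GkRelation (p D A κ : ℂ) (r : ℂ[X]) : Prop :=
  ∀ y l : ℂ, p * (y + D * l) * (r.eval (y + l) - r.eval y) + p / 2 * l * r.eval (y + l)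
    = (κ + p / 2) * l * ((A + 1) * r.eval (y + l) - A * r.eval y)

variable {p D A κ : ℂ} {r : ℂ[X]}

theorem GkRelation.X_mul_derivative_eq (h : GkRelation p D A κ r) (hp : p ≠ 0) :
    X * derivative r = C (κ / p) * r := by
  refine Polynomial.funext fun y => ?_
  -- the relation as a polynomial in `l`, written so that its coefficient of `l` is read off
  have hTaylor : C (p * y) * (taylor y r - C (r.eval y))
      + X * (C (p * D) * (taylor y r - C (r.eval y)) + C (p / 2) * taylor y r
        - C (κ + p / 2) * (C (A + 1) * taylor y r - C (A * r.eval y))) = 0 := by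
    refine Polynomial.funext fun l => ?_
    simp only [eval_add, eval_sub, eval_mul, eval_C, eval_X, taylor_eval, eval_zero]
    rw [add_comm l y]
    linear_combination h y l
  have hLinear := congrArg (coeff · 1) hTaylor
  simp only [coeff_add, coeff_sub, coeff_C_mul, coeff_X_mul _ 0, taylor_coeff_zero,
    taylor_coeff_one, coeff_C, coeff_zero, one_ne_zero, if_true, if_false] at hLinear
  rw [eval_mul, eval_mul, eval_X, eval_C, div_mul_eq_mul_div, eq_div_iff hp]
  linear_combination hLinear

theorem GkRelation.eq_of_eq_C_mul_X_pow {γ : ℂ} {n : ℕ} (h : GkRelation p D A κ r)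
    (hp : p ≠ 0) (hr : r = C γ * X ^ n) (hγ : γ ≠ 0) (hn : n ≠ 0) :
    κ = p ∧ D = 3 / 2 * A + 1 := by
  have hAtZero := h 0 1
  have hAtMinusOne := h (-1) 1
  norm_num [hr, zero_pow hn] at hAtZero hAtMinusOne
  have hAtZero' : p * D + p / 2 = (κ + p / 2) * (A + 1) :=
    mul_right_cancel₀ hγ (by linear_combination hAtZero)
  have hAtMinusOne' : p * (D - 1) = (κ + p / 2) * A :=
    mul_right_cancel₀ (mul_ne_zero hγ (pow_ne_zero n (neg_ne_zero.mpr one_ne_zero)))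
      (by linear_combination hAtMinusOne)
  have hκ : κ = p := by linear_combination hAtMinusOne' - hAtZero'
  refine ⟨hκ, mul_left_cancel₀ hp ?_⟩
  linear_combination hAtMinusOne' + A * hκ

theorem GkRelation.eq_C_mul_X (h : GkRelation p D A κ r) (hp : p ≠ 0) (hκ : κ ≠ 0)
    (hr : r ≠ 0) :
    κ = p ∧ D = 3 / 2 * A + 1 ∧ r = C r.leadingCoeff * X := by
  have hEuler := h.X_mul_derivative_eq hp
  have hDegree := natDegree_eq_of_X_mul_derivative_eq hr hEuler
  have hMonomial := eq_C_leadingCoeff_mul_X_pow_of_X_mul_derivative_eq hEuler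
  have hDegreeNeZero : r.natDegree ≠ 0 := by
    rintro hZero
    rw [hZero, Nat.cast_zero, eq_comm, div_eq_zero_iff] at hDegree
    exact hκ (hDegree.resolve_right hp)
  obtain ⟨hκp, hD⟩ :=
    h.eq_of_eq_C_mul_X_pow hp hMonomial (leadingCoeff_ne_zero.mpr hr) hDegreeNeZero
  have hDegreeOne : r.natDegree = 1 := by
    rw [hκp, div_self hp] at hDegree
    exact_mod_cast hDegree
  exact ⟨hκp, hD, hMonomial.trans (by rw [hDegreeOne, pow_one])⟩

end Polynomial

/-- Let `p, α, Δ, Λ ∈ ℂ` with `p ≠ 0`, and let `k` be a positive integer. Suppose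
`c ∈ ℂ[X,Y]` satisfies, for all `∂, λ ∈ ℂ`:
(i) `(Λ+1)·c(∂+λ, 0) − Λ·c(∂, 0) = c(∂, λ)`, and
(ii) `p·(∂ + Δλ + α)·(c(∂+λ, 0) − c(∂, 0)) + (p/2)·λ·c(∂+λ, 0) = (k + p/2)·λ·c(∂, λ)`.
Then either `c = 0`, or else `k = p`, `Δ = (3/2)Λ + 1`, and there exists `γ ≠ 0` with
`c(∂, λ) = γ·(∂ + (Λ+1)λ + α)` for all `∂, λ`. -/
theorem coefficient_polynomial_Gk_v1 (p a D A : ℂ) (hp : p ≠ 0) (k : ℕ) (hk : 0 < k)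
    (c : MvPolynomial (Fin 2) ℂ)
    (h1 : ∀ x l : ℂ,
      (A + 1) * eval ![x + l, 0] c - A * eval ![x, 0] c = eval ![x, l] c)
    (h2 : ∀ x l : ℂ,
      p * (x + D * l + a) * (eval ![x + l, 0] c - eval ![x, 0] c)
        + p / 2 * l * eval ![x + l, 0] c = ((k : ℂ) + p / 2) * l * eval ![x, l] c) :
    c = 0 ∨
      ((k : ℂ) = p ∧ D = 3 / 2 * A + 1 ∧
        ∃ γ : ℂ, γ ≠ 0 ∧ ∀ x l : ℂ, eval ![x, l] c = γ * (x + (A + 1) * l + a)) := by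
  set r : Polynomial ℂ := aeval ![Polynomial.X - Polynomial.C a, 0] c
  have hq (x : ℂ) : eval ![x, 0] c = r.eval (x + a) := by
    rw [Polynomial.eval_mvPolynomial_aeval]
    congr 2
    funext i
    fin_cases i <;> simp
  have hc (x l : ℂ) : eval ![x, l] c = (A + 1) * r.eval (x + l + a) - A * r.eval (x + a) := by
    rw [← h1, hq, hq]
  have hG : Polynomial.GkRelation p D A k r := by
    intro y l
    have h2' := h2 (y - a) l
    rw [hq, hq, hc, show y - a + l + a = y + l by ring, sub_add_cancel] at h2'
    linear_combination h2'
  rcases eq_or_ne r 0 with hr | hr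
  · left
    refine MvPolynomial.funext fun v => ?_
    rw [show v = ![v 0, v 1] by ext i; fin_cases i <;> rfl, hc, hr]
    simp
  · obtain ⟨hkp, hD, hlin⟩ := hG.eq_C_mul_X hp (Nat.cast_ne_zero.mpr hk.ne') hr
    refine .inr ⟨hkp, hD, r.leadingCoeff, Polynomial.leadingCoeff_ne_zero.mpr hr, fun x l => ?_⟩
    rw [hc]
    conv_lhs => rw [hlin]
    simp only [Polynomial.eval_mul, Polynomial.eval_C, Polynomial.eval_X]
    ring
end

section
/- Let p, α, Δ, Λ ∈ ℂ with p ≠ 0, and let k be a positive integer. Suppose c ∈ ℂ[X,Y] satisfies, for all ∂, λ ∈ ℂ: (i) (Λ+1)·c(∂+λ, 0) − Λ·c(∂, 0) = c(∂, λ), and (ii) p·(∂ + (Δ+1)λ + α)·(c(∂+λ, 0) − c(∂, 0)) − (p/2)·λ·c(∂+λ, 0) = (k + p/2)·λ·c(∂, λ). Then c is a constant polynomial β ∈ ℂ, and if k + p ≠ 0 then β = 0. -/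
open MvPolynomial

section AuxGkV2



private lemma aux_gk2_coeff_X_mul_one (f : Polynomial ℂ) : (Polynomial.X * f).coeff 1 = f.coeff 0 := by
  simpa using Polynomial.coeff_X_mul f 0
private lemma aux_gk2_coeff_X_mul_two (f : Polynomial ℂ) : (Polynomial.X * f).coeff 2 = f.coeff 1 := by
  simpa using Polynomial.coeff_X_mul f 1
private lemma aux_gk2_coeff_X_mul_three (f : Polynomial ℂ) : (Polynomial.X * f).coeff 3 = f.coeff 2 := by
  simpa using Polynomial.coeff_X_mul f 2

private lemma aux_gk2_eval_aeval (c : MvPolynomial (Fin 2) ℂ) (x : ℂ) :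
    (MvPolynomial.aeval ![(Polynomial.X : Polynomial ℂ), 0] c).eval x = MvPolynomial.eval ![x, 0] c := by
  induction c using MvPolynomial.induction_on with
  | C r => simp
  | add f g hf hg => simp [hf, hg]
  | mul_X f i hf =>
    simp only [map_mul, Polynomial.eval_mul, hf, MvPolynomial.aeval_X, MvPolynomial.eval_X]
    congr 1
    fin_cases i <;> simp

private lemma aux_gk2_taylor_hasseDeriv (r : ℂ) (j : ℕ) (f : Polynomial ℂ) :
    Polynomial.taylor r (Polynomial.hasseDeriv j f)
      = Polynomial.hasseDeriv j (Polynomial.taylor r f) := by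
  ext n
  rw [Polynomial.taylor_coeff, Polynomial.hasseDeriv_coeff, Polynomial.taylor_coeff]
  have h := Polynomial.hasseDeriv_comp (R := ℂ) n j
  have h2 := congrFun (congrArg (fun g => g.toFun) h) f
  rw [show ((Polynomial.hasseDeriv n) ((Polynomial.hasseDeriv j) f)) = (n + j).choose n • (Polynomial.hasseDeriv (n + j)) f from h2]
  simp [Nat.choose_symm_add, mul_comm]

end AuxGkV2

/-- Let `p, α, Δ, Λ ∈ ℂ` with `p ≠ 0`, and let `k` be a positive integer. Suppose
`c ∈ ℂ[X,Y]` satisfies, for all `∂, λ ∈ ℂ`: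
(i) `(Λ+1)·c(∂+λ, 0) − Λ·c(∂, 0) = c(∂, λ)`, and
(ii) `p·(∂ + (Δ+1)λ + α)·(c(∂+λ, 0) − c(∂, 0)) − (p/2)·λ·c(∂+λ, 0) = (k + p/2)·λ·c(∂, λ)`.
Then `c` is a constant polynomial `β ∈ ℂ`, and if `k + p ≠ 0` then `β = 0`. -/
theorem coefficient_polynomial_Gk_v2 (p a D A : ℂ) (hp : p ≠ 0) (k : ℕ) (hk : 0 < k)
    (c : MvPolynomial (Fin 2) ℂ)
    (h1 : ∀ x l : ℂ,
      (A + 1) * eval ![x + l, 0] c - A * eval ![x, 0] c = eval ![x, l] c)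
    (h2 : ∀ x l : ℂ,
      p * (x + (D + 1) * l + a) * (eval ![x + l, 0] c - eval ![x, 0] c)
        - p / 2 * l * eval ![x + l, 0] c = ((k : ℂ) + p / 2) * l * eval ![x, l] c) :
    ∃ b : ℂ, (∀ x l : ℂ, eval ![x, l] c = b) ∧ ((k : ℂ) + p ≠ 0 → b = 0) := by
  classical
  set q : Polynomial ℂ := MvPolynomial.aeval ![(Polynomial.X : Polynomial ℂ), 0] c with hqdef
  have hq : ∀ x : ℂ, q.eval x = eval ![x, 0] c := fun x => aux_gk2_eval_aeval c x
  have hE : ∀ x l : ℂ,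
      p * (x + (D + 1) * l + a) * (q.eval (x + l) - q.eval x)
        - p / 2 * l * q.eval (x + l)
        = ((k : ℂ) + p / 2) * l * ((A + 1) * q.eval (x + l) - A * q.eval x) := by
    intro x l
    rw [hq, hq]
    linear_combination h2 x l - ((k : ℂ) + p / 2) * l * h1 x l
  have hPoly : ∀ x : ℂ,
      (Polynomial.C (p * (x + a)) * (Polynomial.taylor x q - Polynomial.C (q.eval x))
        + Polynomial.C (p * (D + 1)) *
            (Polynomial.X * (Polynomial.taylor x q - Polynomial.C (q.eval x)))
        - Polynomial.C (p / 2) * (Polynomial.X * Polynomial.taylor x q)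
        - Polynomial.C (((k : ℂ) + p / 2) * (A + 1)) * (Polynomial.X * Polynomial.taylor x q)
        + Polynomial.C (((k : ℂ) + p / 2) * A * q.eval x) * Polynomial.X : Polynomial ℂ) = 0 := by
    intro x
    apply Polynomial.funext
    intro l
    simp only [Polynomial.eval_add, Polynomial.eval_sub, Polynomial.eval_mul, Polynomial.eval_C,
      Polynomial.eval_X, Polynomial.taylor_eval, Polynomial.eval_zero, add_comm l x]
    linear_combination hE x l
  set s : ℂ := p / 2 + ((k : ℂ) + p / 2) * (A + 1) - p * (D + 1) with hs
  -- scalar equations from coefficients 1, 2, 3 of hPoly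
  have E1 : ∀ x : ℂ, p * (x + a) * (Polynomial.hasseDeriv 1 q).eval x
      = ((k : ℂ) + p) * q.eval x := by
    intro x
    have h := congrArg (fun P => Polynomial.coeff P 1) (hPoly x)
    simp only [Polynomial.coeff_add, Polynomial.coeff_sub, Polynomial.coeff_C_mul,
      aux_gk2_coeff_X_mul_one, Polynomial.coeff_C, Polynomial.taylor_coeff,
      Polynomial.taylor_coeff_zero, Polynomial.coeff_X_one, Polynomial.coeff_zero,
      Polynomial.hasseDeriv_zero, LinearMap.id_apply, mul_one] at h
    norm_num at h
    simp only [← Polynomial.hasseDeriv_one'] at h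
    linear_combination h
  have E2 : ∀ x : ℂ, p * (x + a) * (Polynomial.hasseDeriv 2 q).eval x
      = s * (Polynomial.hasseDeriv 1 q).eval x := by
    intro x
    have h := congrArg (fun P => Polynomial.coeff P 2) (hPoly x)
    simp only [Polynomial.coeff_add, Polynomial.coeff_sub, Polynomial.coeff_C_mul,
      aux_gk2_coeff_X_mul_two, Polynomial.coeff_C, Polynomial.taylor_coeff,
      Polynomial.taylor_coeff_zero, Polynomial.coeff_X, Polynomial.hasseDeriv_zero,
      LinearMap.id_apply, mul_one] at h
    norm_num at h
    simp only [← Polynomial.hasseDeriv_one'] at h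
    rw [hs]
    linear_combination h
  have E3 : ∀ x : ℂ, p * (x + a) * (Polynomial.hasseDeriv 3 q).eval x
      = s * (Polynomial.hasseDeriv 2 q).eval x := by
    intro x
    have h := congrArg (fun P => Polynomial.coeff P 3) (hPoly x)
    simp only [Polynomial.coeff_add, Polynomial.coeff_sub, Polynomial.coeff_C_mul,
      aux_gk2_coeff_X_mul_three, Polynomial.coeff_C, Polynomial.taylor_coeff,
      Polynomial.taylor_coeff_zero, Polynomial.coeff_X, Polynomial.hasseDeriv_zero,
      LinearMap.id_apply, mul_one] at h
    norm_num at h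
    rw [hs]
    linear_combination h
  -- polynomial identities
  have P1 : Polynomial.C p * (Polynomial.X + Polynomial.C a) * Polynomial.hasseDeriv 1 q
      = Polynomial.C ((k : ℂ) + p) * q := by
    apply Polynomial.funext
    intro x
    simp only [Polynomial.eval_mul, Polynomial.eval_add, Polynomial.eval_C, Polynomial.eval_X]
    linear_combination E1 x
  have P2 : Polynomial.C p * (Polynomial.X + Polynomial.C a) * Polynomial.hasseDeriv 2 q
      = Polynomial.C s * Polynomial.hasseDeriv 1 q := by
    apply Polynomial.funext
    intro x
    simp only [Polynomial.eval_mul, Polynomial.eval_add, Polynomial.eval_C, Polynomial.eval_X]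
    linear_combination E2 x
  have P3 : Polynomial.C p * (Polynomial.X + Polynomial.C a) * Polynomial.hasseDeriv 3 q
      = Polynomial.C s * Polynomial.hasseDeriv 2 q := by
    apply Polynomial.funext
    intro x
    simp only [Polynomial.eval_mul, Polynomial.eval_add, Polynomial.eval_C, Polynomial.eval_X]
    linear_combination E3 x
  -- shift to Q
  set Q : Polynomial ℂ := Polynomial.taylor (-a) q with hQdef
  have hshift : ∀ (j : ℕ) (w : ℂ),
      ∀ f g : Polynomial ℂ,
        (Polynomial.C p * (Polynomial.X + Polynomial.C a) * Polynomial.hasseDeriv j q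
          = Polynomial.C w * f) →
        (Polynomial.taylor (-a) f = g) →
        Polynomial.C p * Polynomial.X * Polynomial.hasseDeriv j Q
          = Polynomial.C w * g := by
    intro j w f g hPf hfg
    have h := congrArg (Polynomial.taylor (-a)) hPf
    rw [Polynomial.taylor_mul, Polynomial.taylor_mul, Polynomial.taylor_C,
      map_add, Polynomial.taylor_X, Polynomial.taylor_C,
      aux_gk2_taylor_hasseDeriv, Polynomial.taylor_mul, Polynomial.taylor_C, hfg] at h
    rw [← h]
    congr 1
    rw [add_assoc]
    simp
  have Q1 : Polynomial.C p * Polynomial.X * Polynomial.hasseDeriv 1 Q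
      = Polynomial.C ((k : ℂ) + p) * Q :=
    hshift 1 _ q Q P1 rfl
  have Q2 : Polynomial.C p * Polynomial.X * Polynomial.hasseDeriv 2 Q
      = Polynomial.C s * Polynomial.hasseDeriv 1 Q :=
    hshift 2 _ _ _ P2 (aux_gk2_taylor_hasseDeriv (-a) 1 q)
  have Q3 : Polynomial.C p * Polynomial.X * Polynomial.hasseDeriv 3 Q
      = Polynomial.C s * Polynomial.hasseDeriv 2 Q :=
    hshift 3 _ _ _ P3 (aux_gk2_taylor_hasseDeriv (-a) 2 q)
  -- coefficient equations
  have F1 : ∀ j : ℕ, p * (((j + 1).choose 1 : ℕ) : ℂ) * Q.coeff (j + 1)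
      = ((k : ℂ) + p) * Q.coeff (j + 1) := by
    intro j
    have h := congrArg (fun P => Polynomial.coeff P (j + 1)) Q1
    simp only [mul_assoc, Polynomial.coeff_C_mul, Polynomial.coeff_X_mul,
      Polynomial.hasseDeriv_coeff] at h
    simpa [mul_assoc] using h
  have F2 : ∀ j : ℕ, p * (((j + 2).choose 2 : ℕ) : ℂ) * Q.coeff (j + 2)
      = s * (((j + 2).choose 1 : ℕ) : ℂ) * Q.coeff (j + 2) := by
    intro j
    have h := congrArg (fun P => Polynomial.coeff P (j + 1)) Q2
    simp only [mul_assoc, Polynomial.coeff_C_mul, Polynomial.coeff_X_mul,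
      Polynomial.hasseDeriv_coeff] at h
    have : j + 1 + 1 = j + 2 := by ring
    rw [this] at h
    simpa [mul_assoc] using h
  have F3 : ∀ j : ℕ, p * (((j + 2).choose 3 : ℕ) : ℂ) * Q.coeff (j + 2)
      = s * (((j + 2).choose 2 : ℕ) : ℂ) * Q.coeff (j + 2) := by
    intro j
    cases j with
    | zero =>
      have h := congrArg (fun P => Polynomial.coeff P 0) Q3
      simp only [Polynomial.coeff_C_mul, Polynomial.mul_coeff_zero, Polynomial.coeff_X_zero,
        Polynomial.hasseDeriv_coeff] at h
      norm_num at h ⊢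
      exact h
    | succ i =>
      have h := congrArg (fun P => Polynomial.coeff P (i + 1)) Q3
      simp only [mul_assoc, Polynomial.coeff_C_mul, Polynomial.coeff_X_mul,
        Polynomial.hasseDeriv_coeff] at h
      have e : i + 1 + 2 = i + 3 := by omega
      rw [e]
      simpa [mul_assoc] using h
  -- kill coefficients
  have hm1 : Q.coeff 1 = 0 := by
    have h := F1 0
    norm_num at h
    rcases h with h | h
    · exact absurd h hk.ne'
    · exact h
  have hm2 : ∀ j : ℕ, Q.coeff (j + 2) = 0 := by
    intro j
    by_contra hm
    have e2 : p * (((j + 2).choose 2 : ℕ) : ℂ) = s * (((j + 2).choose 1 : ℕ) : ℂ) :=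
      mul_right_cancel₀ hm (F2 j)
    have e3 : p * (((j + 2).choose 3 : ℕ) : ℂ) = s * (((j + 2).choose 2 : ℕ) : ℂ) :=
      mul_right_cancel₀ hm (F3 j)
    rw [Nat.choose_one_right] at e2
    have hch1 : (((j + 2).choose 2 : ℕ) : ℂ) * 2 = ((j + 2 : ℕ) : ℂ) * ((j + 1 : ℕ) : ℂ) := by
      have h' := Nat.choose_succ_right_eq (j + 2) 1
      rw [Nat.choose_one_right] at h'
      have h'' : (j + 2).choose 2 * 2 = (j + 2) * (j + 1) := by rw [h']; congr 1
      exact_mod_cast congrArg (fun m : ℕ => (m : ℂ)) h''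
    have hch2 : (((j + 2).choose 3 : ℕ) : ℂ) * 3 = (((j + 2).choose 2 : ℕ) : ℂ) * ((j : ℕ) : ℂ) := by
      have h' := Nat.choose_succ_right_eq (j + 2) 2
      have h'' : (j + 2).choose 3 * 3 = (j + 2).choose 2 * j := by rw [h']; congr 1
      exact_mod_cast congrArg (fun m : ℕ => (m : ℂ)) h''
    have hC2 : (((j + 2).choose 2 : ℕ) : ℂ) ≠ 0 :=
      Nat.cast_ne_zero.mpr (Nat.choose_pos (by omega)).ne'
    have hN : ((j + 2 : ℕ) : ℂ) ≠ 0 := Nat.cast_ne_zero.mpr (by omega)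
    have k1 : p * ((((j + 2).choose 3 : ℕ) : ℂ) * ((j + 2 : ℕ) : ℂ)
        - (((j + 2).choose 2 : ℕ) : ℂ) * (((j + 2).choose 2 : ℕ) : ℂ)) = 0 := by
      linear_combination ((j + 2 : ℕ) : ℂ) * e3 - (((j + 2).choose 2 : ℕ) : ℂ) * e2
    have k2 := (mul_eq_zero.mp k1).resolve_left hp
    have k3 : (((j + 2).choose 2 : ℕ) : ℂ) *
        (3 * (((j + 2).choose 2 : ℕ) : ℂ) - ((j : ℕ) : ℂ) * ((j + 2 : ℕ) : ℂ)) = 0 := by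
      linear_combination (-3 : ℂ) * k2 + ((j + 2 : ℕ) : ℂ) * hch2
    have k4 := (mul_eq_zero.mp k3).resolve_left hC2
    have k5 : ((j + 2 : ℕ) : ℂ) * (3 * ((j + 1 : ℕ) : ℂ) - 2 * ((j : ℕ) : ℂ)) = 0 := by
      linear_combination (-3 : ℂ) * hch1 + 2 * k4
    have k6 := (mul_eq_zero.mp k5).resolve_left hN
    have k7 : ((j + 3 : ℕ) : ℂ) = 0 := by push_cast at k6 ⊢; linear_combination k6
    exact absurd (Nat.cast_eq_zero.mp k7) (by omega)
  -- Q is constant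
  have hQC : Q = Polynomial.C (Q.coeff 0) := by
    ext n
    match n with
    | 0 => simp
    | 1 => simpa using hm1
    | (i + 2) => simpa using hm2 i
  have hqC : q = Polynomial.C (Q.coeff 0) := by
    have ht : Polynomial.taylor a Q = q := by
      rw [hQdef, Polynomial.taylor_taylor]
      simp
    rw [← ht, hQC, Polynomial.taylor_C]
    simp
  have hevq : ∀ x : ℂ, q.eval x = Q.coeff 0 := fun x => by rw [hqC]; simp
  refine ⟨Q.coeff 0, ?_, ?_⟩
  · intro x l
    rw [← h1 x l, ← hq, ← hq, hevq, hevq]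
    ring
  · intro hkp
    have h := hE 0 1
    simp only [hevq] at h
    have hz : ((k : ℂ) + p) * Q.coeff 0 = 0 := by linear_combination -h
    exact (mul_eq_zero.mp hz).resolve_left hkp
end

section
/- Let L be a Lie algebra over ℂ and V a module over L. Suppose given ℂ-subspaces L₀ ⊇ L₁ ⊇ L₂ ⊇ ⋯ of L and an element T ∈ L such that for every n ≥ 1 the ℂ-span of {⁅T, x⁆ : x ∈ Lₙ} equals L_{n−1}. For n ∈ ℤ≥0 set Vₙ = {v ∈ V : x • v = 0 for all x ∈ Lₙ}. Assume Vₙ ≠ 0 for some n, let N be the minimal index with V_N ≠ 0, and assume N ≥ 1. Then V_N is ℂ[T]-linearly independent in V: whenever v₀, …, v_r ∈ V_N satisfy Σ_{i=0}^{r} Tⁱ • vᵢ = 0 (with Tⁱ • v denoting the i-fold action of T), all vᵢ = 0. In particular, if V is finitely generated over ℂ[T] (under the action of T), then V_N is finite-dimensional. -/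
section AuxLemmas

variable {L : Type*} [LieRing L] [LieAlgebra ℂ L]
variable {V : Type*} [AddCommGroup V] [Module ℂ V] [LieRingModule L V] [LieModule ℂ L V]

/-- The action of a fixed Lie algebra element on the module, as a linear map. -/
def lieActAux (x : L) : V →ₗ[ℂ] V where
  toFun v := ⁅x, v⁆
  map_add' a b := lie_add x a b
  map_smul' t v := lie_smul t x v

@[simp] lemma lieActAux_apply (x : L) (v : V) : lieActAux x v = ⁅x, v⁆ := rfl

/-- The map `y ↦ ⁅y, v⁆` as a linear map on the Lie algebra. -/
def lieActRAux (v : V) : L →ₗ[ℂ] V where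
  toFun x := ⁅x, v⁆
  map_add' a b := add_lie a b v
  map_smul' t x := smul_lie t x v

@[simp] lemma lieActRAux_apply (v : V) (x : L) : lieActRAux v x = ⁅x, v⁆ := rfl

omit [LieAlgebra ℂ L] [Module ℂ V] [LieModule ℂ L V] in
/-- Key commutation formula: if the lower iterated brackets kill `v`, then
`⁅x, T^[m] v⁆ = ⁅(ad' T)^[m] x, v⁆` where `ad' T y = ⁅y, T⁆`. -/
lemma comm_key (T : L) (m : ℕ) (x : L) (v : V)
    (h : ∀ j < m, ⁅(fun y : L => ⁅y, T⁆)^[j] x, v⁆ = 0) :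
    ⁅x, (fun w : V => ⁅T, w⁆)^[m] v⁆ = ⁅(fun y : L => ⁅y, T⁆)^[m] x, v⁆ := by
  induction m generalizing x with
  | zero => simp
  | succ m ih =>
    have h1 : ⁅x, (fun w : V => ⁅T, w⁆)^[m] v⁆ = 0 := by
      rw [ih x (fun j hj => h j (by omega))]
      exact h m (by omega)
    have h2 : ⁅⁅x, T⁆, (fun w : V => ⁅T, w⁆)^[m] v⁆
        = ⁅(fun y : L => ⁅y, T⁆)^[m] ⁅x, T⁆, v⁆ := by
      refine ih ⁅x, T⁆ (fun j hj => ?_)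
      have := h (j + 1) (by omega)
      rwa [Function.iterate_succ_apply] at this
    rw [Function.iterate_succ_apply']
    show ⁅x, ⁅T, (fun w : V => ⁅T, w⁆)^[m] v⁆⁆ = _
    rw [leibniz_lie, h1, lie_zero, add_zero, h2, ← Function.iterate_succ_apply]

end AuxLemmas

/-- Lemma 5.2 of the paper (Lie algebra form). Let `L` be a Lie algebra over ℂ and
`V` an `L`-module. Suppose given ℂ-subspaces `L₀ ⊇ L₁ ⊇ L₂ ⊇ ⋯` of `L` and `T ∈ L`
such that for every `n ≥ 1` the ℂ-span of `{⁅T, x⁆ : x ∈ Lₙ}` equals `L_{n−1}`.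
Let `P n v` mean `v ∈ Vₙ`, i.e. `⁅x, v⁆ = 0` for all `x ∈ Lₙ`. Assume `V_N ≠ 0`
for the minimal index `N`, with `N ≥ 1`. Then `V_N` is ℂ[T]-linearly independent:
`Σ Tⁱ • vᵢ = 0` with all `vᵢ ∈ V_N` forces all `vᵢ = 0`. In particular, if `V` is
finitely generated over ℂ[T] then `V_N` is finite-dimensional. -/
theorem polynomial_independence_of_VN
    (L : Type*) [LieRing L] [LieAlgebra ℂ L]
    (V : Type*) [AddCommGroup V] [Module ℂ V] [LieRingModule L V] [LieModule ℂ L V]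
    (Ls : ℕ → Submodule ℂ L)
    (hchain : ∀ n : ℕ, Ls (n + 1) ≤ Ls n)
    (T : L)
    (hT : ∀ n : ℕ, 1 ≤ n →
      Submodule.span ℂ {y : L | ∃ x ∈ Ls n, y = ⁅T, x⁆} = Ls (n - 1))
    (P : ℕ → V → Prop)
    (hP : ∀ (n : ℕ) (v : V), P n v ↔ ∀ x ∈ Ls n, ⁅x, v⁆ = 0)
    (N : ℕ) (hN1 : 1 ≤ N)
    (hVN : ∃ v : V, v ≠ 0 ∧ P N v)
    (hmin : ∀ m < N, ∀ v : V, P m v → v = 0) :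
    (∀ r : ℕ, ∀ v : Fin (r + 1) → V, (∀ i, P N (v i)) →
        ∑ i : Fin (r + 1), (fun w : V => ⁅T, w⁆)^[(i : ℕ)] (v i) = 0 →
        ∀ i, v i = 0) ∧
    ((∃ s : Finset V, ∀ w : V,
        w ∈ Submodule.span ℂ
          {u : V | ∃ v ∈ s, ∃ i : ℕ, u = (fun w : V => ⁅T, w⁆)^[i] v}) →
      ∃ W : Submodule ℂ V, (∀ v : V, v ∈ W ↔ P N v) ∧ FiniteDimensional ℂ W) := by
  obtain ⟨N', rfl⟩ : ∃ N', N = N' + 1 := ⟨N - 1, by omega⟩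
  have hmono : Antitone Ls := antitone_nat_of_succ_le hchain
  set g : L → L := fun y => ⁅y, T⁆ with hg
  set f : V → V := fun w => ⁅T, w⁆ with hf
  -- one step of descent on the Lie algebra filtration
  have hstep : ∀ (n : ℕ) (x : L), x ∈ Ls (n + 1) → g x ∈ Ls n := by
    intro n x hx
    have h1 : ⁅T, x⁆ ∈ Ls n := by
      have h2 := hT (n + 1) (by omega)
      simp only [Nat.add_sub_cancel] at h2
      rw [← h2]
      exact Submodule.subset_span ⟨x, hx, rfl⟩
    have h3 : g x = -⁅T, x⁆ := by simp [hg]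
    rw [h3]; exact neg_mem h1
  have hiter : ∀ (j n : ℕ) (x : L), x ∈ Ls (n + j) → g^[j] x ∈ Ls n := by
    intro j
    induction j with
    | zero => intro n x hx; simpa using hx
    | succ j ih =>
      intro n x hx
      rw [Function.iterate_succ_apply]
      exact ih n (g x) (hstep (n + j) x (by rwa [show n + (j + 1) = n + j + 1 by ring] at hx))
  -- Part 1
  have part1 : ∀ r : ℕ, ∀ v : Fin (r + 1) → V, (∀ i, P (N' + 1) (v i)) →
      ∑ i : Fin (r + 1), f^[(i : ℕ)] (v i) = 0 → ∀ i, v i = 0 := by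
    intro r
    induction r with
    | zero =>
      intro v hv hsum i
      have h0 : v 0 = 0 := by simpa using hsum
      have hi0 : i = 0 := Fin.ext (by omega)
      rw [hi0]; exact h0
    | succ r ih =>
      intro v hv hsum
      have hkill : ∀ j : ℕ, j ≤ r → ∀ x ∈ Ls (N' + 1 + r), ∀ w : V,
          P (N' + 1) w → ⁅g^[j] x, w⁆ = 0 := by
        intro j hj x hx w hw
        have h1 : g^[j] x ∈ Ls (N' + 1 + (r - j)) := by
          apply hiter j _ x
          rwa [show N' + 1 + (r - j) + j = N' + 1 + r by omega]
        exact (hP _ w).mp hw _ (hmono (by omega) h1)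
      have hlast0 : ∀ x ∈ Ls (N' + 1 + r), ⁅g^[r + 1] x, v (Fin.last (r + 1))⁆ = 0 := by
        intro x hx
        have hsum2 : ∑ i : Fin (r + 2), ⁅x, f^[(i : ℕ)] (v i)⁆ = 0 := by
          have hc := congrArg (lieActAux (V := V) x) hsum
          simpa [map_sum] using hc
        have hterm : ∀ i : Fin (r + 2), ⁅x, f^[(i : ℕ)] (v i)⁆ = ⁅g^[(i : ℕ)] x, v i⁆ :=
          fun i => comm_key T (i : ℕ) x (v i)
            (fun j hj => hkill j (by omega) x hx (v i) (hv i))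
        rw [Finset.sum_congr rfl (fun i _ => hterm i), Fin.sum_univ_castSucc] at hsum2
        have hzero : ∀ i : Fin (r + 1),
            ⁅g^[((Fin.castSucc i : Fin (r + 2)) : ℕ)] x, v (Fin.castSucc i)⁆ = 0 := by
          intro i
          exact hkill (i : ℕ) (by omega) x hx _ (hv _)
        rw [Finset.sum_congr rfl (fun i _ => hzero i)] at hsum2
        simpa using hsum2
      set vl := v (Fin.last (r + 1)) with hvl_def
      -- downward induction to reach Ls N'
      have hdesc : ∀ j : ℕ, (∀ x ∈ Ls (N' + j), ⁅g^[j] x, vl⁆ = 0) →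
          ∀ y ∈ Ls N', ⁅y, vl⁆ = 0 := by
        intro j
        induction j with
        | zero => intro h y hy; simpa using h y hy
        | succ j ihj =>
          intro h
          apply ihj
          intro x hx
          have hspan : Ls (N' + j) =
              Submodule.span ℂ {y : L | ∃ z ∈ Ls (N' + j + 1), y = ⁅T, z⁆} := by
            have h2 := hT (N' + j + 1) (by omega)
            simpa using h2.symm
          rw [hspan] at hx
          have hker : x ∈ LinearMap.ker
              ((lieActRAux vl).comp ((lieActRAux (V := L) T) ^ j)) := by
            refine Submodule.span_le.mpr ?_ hx
            rintro y ⟨z, hz, rfl⟩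
            simp only [SetLike.mem_coe, LinearMap.mem_ker, LinearMap.comp_apply]
            have hy : ⁅T, z⁆ = -((lieActRAux (V := L) T) z) := by
              simp [lie_skew]
            rw [hy, map_neg, map_neg, Module.End.pow_apply]
            have hcoe : ⇑(lieActRAux (V := L) T) = g := rfl
            rw [hcoe, ← Function.iterate_succ_apply]
            simp only [lieActRAux_apply]
            rw [h z hz, neg_zero]
          simp only [LinearMap.mem_ker, LinearMap.comp_apply, Module.End.pow_apply] at hker
          have hcoe : ⇑(lieActRAux (V := L) T) = g := rfl
          rw [hcoe] at hker
          simpa using hker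
      have hPvl : P N' vl := by
        refine (hP N' vl).mpr (hdesc (r + 1) ?_)
        intro x hx
        exact hlast0 x (by rwa [show N' + 1 + r = N' + (r + 1) by ring])
      have hvl : vl = 0 := hmin N' (by omega) vl hPvl
      have hsum' : ∑ i : Fin (r + 1), f^[(i : ℕ)] ((v ∘ Fin.castSucc) i) = 0 := by
        rw [Fin.sum_univ_castSucc] at hsum
        have hlastterm : f^[((Fin.last (r + 1) : Fin (r + 2)) : ℕ)] (v (Fin.last (r + 1))) = 0 := by
          rw [← hvl_def, hvl]
          exact Function.iterate_fixed (by simp [hf]) _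
        rw [hlastterm, add_zero] at hsum
        simpa using hsum
      intro i
      refine Fin.lastCases ?_ ?_ i
      · exact hvl
      · intro j
        exact ih (v ∘ Fin.castSucc) (fun i => hv _) hsum' j
  refine ⟨part1, ?_⟩
  -- Part 2
  rintro ⟨s, hs⟩
  classical
  set m := s.card with hm
  set F : V →ₗ[ℂ] V := lieActAux T with hF
  have hFf : ⇑F = f := rfl
  set W : Submodule ℂ V := ⨅ x : (Ls (N' + 1)), LinearMap.ker (lieActAux (V := V) (x : L))
    with hW
  have hWmem : ∀ v : V, v ∈ W ↔ P (N' + 1) v := by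
    intro v
    rw [hP]
    constructor
    · intro hv x hx
      have := (Submodule.mem_iInf _).mp hv ⟨x, hx⟩
      simpa using this
    · intro hv
      refine (Submodule.mem_iInf _).mpr ?_
      rintro ⟨x, hx⟩
      simpa using hv x hx
  refine ⟨W, hWmem, ?_⟩
  -- the finite-dimensional "levels"
  set U : ℕ → Submodule ℂ V :=
    fun D => Submodule.span ℂ
      (((s ×ˢ Finset.Iic D).image (fun p : V × ℕ => (⇑F)^[p.2] p.1) : Finset V) : Set V)
    with hU
  have hUfin : ∀ D, FiniteDimensional ℂ (U D) :=
    fun D => FiniteDimensional.span_of_finite ℂ (Finset.finite_toSet _)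
  have hUrank : ∀ D, Module.finrank ℂ (U D) ≤ m * (D + 1) := by
    intro D
    refine le_trans (finrank_span_finset_le_card _) ?_
    refine le_trans (Finset.card_image_le) ?_
    rw [Finset.card_product, Nat.card_Iic]
  have hUmono : Monotone U := by
    intro a b hab
    apply Submodule.span_mono
    intro u hu
    simp only [Finset.coe_image, Set.mem_image, Finset.mem_coe, Finset.mem_product,
      Finset.mem_Iic] at hu ⊢
    obtain ⟨⟨w, i⟩, ⟨hws, hib⟩, rfl⟩ := hu
    exact ⟨(w, i), ⟨hws, le_trans hib hab⟩, rfl⟩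
  have hFU : ∀ D, ∀ u ∈ U D, F u ∈ U (D + 1) := by
    intro D u hu
    have hmap : Submodule.map F (U D) ≤ U (D + 1) := by
      rw [hU, Submodule.map_span]
      apply Submodule.span_le.mpr
      rintro _ ⟨_, hu', rfl⟩
      simp only [Finset.coe_image, Set.mem_image, Finset.mem_coe, Finset.mem_product,
        Finset.mem_Iic] at hu'
      obtain ⟨⟨w, i⟩, ⟨hws, hiD⟩, rfl⟩ := hu'
      apply Submodule.subset_span
      simp only [Finset.coe_image, Set.mem_image, Finset.mem_coe, Finset.mem_product,
        Finset.mem_Iic]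
      exact ⟨(w, i + 1), ⟨hws, by omega⟩, (Function.iterate_succ_apply' (⇑F) i w)⟩
    exact hmap ⟨u, hu, rfl⟩
  have hFiter : ∀ (k D : ℕ), ∀ u ∈ U D, (⇑F)^[k] u ∈ U (D + k) := by
    intro k
    induction k with
    | zero => intro D u hu; simpa using hu
    | succ k ihk =>
      intro D u hu
      rw [Function.iterate_succ_apply']
      rw [show D + (k + 1) = (D + k) + 1 by ring]
      exact hFU _ _ (ihk D u hu)
  have hmemU : ∀ w : V, ∃ D, w ∈ U D := by
    intro w
    have hw := hs w
    induction hw using Submodule.span_induction with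
    | mem u hu =>
      obtain ⟨vv, hv, i, rfl⟩ := hu
      refine ⟨i, Submodule.subset_span ?_⟩
      simp only [Finset.coe_image, Set.mem_image, Finset.mem_coe, Finset.mem_product,
        Finset.mem_Iic]
      exact ⟨(vv, i), ⟨hv, le_refl i⟩, rfl⟩
    | zero => exact ⟨0, zero_mem _⟩
    | add a b _ _ iha ihb =>
      obtain ⟨D1, h1⟩ := iha
      obtain ⟨D2, h2⟩ := ihb
      exact ⟨max D1 D2, add_mem (hUmono (le_max_left _ _) h1) (hUmono (le_max_right _ _) h2)⟩
    | smul c a _ iha =>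
      obtain ⟨D, h⟩ := iha
      exact ⟨D, Submodule.smul_mem _ c h⟩
  -- any finite linearly independent family in W has size ≤ m
  have hbound : ∀ (t : Finset ↥W), LinearIndependent ℂ (fun i : ↥t => (i : ↥W)) →
      t.card ≤ m := by
    intro t hind
    set ι := {x // x ∈ t} with hι
    set gv : ι → ↥W := fun i => (i : ↥W) with hgv
    rw [← Fintype.card_coe]
    by_contra hn
    push_neg at hn
    have hn' : m + 1 ≤ Fintype.card ι := hn
    obtain ⟨D, hD⟩ : ∃ D, ∀ k : ι, (gv k : V) ∈ U D := by
      choose Df hDf using fun k => hmemU (gv k)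
      exact ⟨Finset.univ.sup Df, fun k =>
        hUmono (Finset.le_sup (Finset.mem_univ k)) (hDf k)⟩
    have key : ∀ r : ℕ, (r + 1) * Fintype.card ι ≤ m * (D + r + 1) := by
      intro r
      have hmem2 : ∀ p : Fin (r + 1) × ι, (⇑F)^[(p.1 : ℕ)] (gv p.2 : V) ∈ U (D + r) := by
        intro p
        exact hUmono (by omega : D + (p.1 : ℕ) ≤ D + r) (hFiter _ D _ (hD p.2))
      have hindep : LinearIndependent ℂ
          (fun p : Fin (r + 1) × ι => (⟨(⇑F)^[(p.1 : ℕ)] (gv p.2 : V), hmem2 p⟩ : U (D + r))) := by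
        rw [Fintype.linearIndependent_iff]
        intro c hc p
        have hcV : ∑ p : Fin (r + 1) × ι, c p • (⇑F)^[(p.1 : ℕ)] (gv p.2 : V) = 0 := by
          have := congrArg ((U (D + r)).subtype) hc
          simpa [map_sum] using this
        have hre : ∑ i : Fin (r + 1), f^[(i : ℕ)] (∑ k : ι, c (i, k) • (gv k : V)) = 0 := by
          rw [← hFf]
          rw [Fintype.sum_prod_type] at hcV
          rw [← hcV]
          refine Finset.sum_congr rfl (fun i _ => ?_)
          rw [← Module.End.pow_apply, map_sum]
          refine Finset.sum_congr rfl (fun k _ => ?_)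
          rw [map_smul, Module.End.pow_apply]
        have hPi : ∀ i : Fin (r + 1), P (N' + 1) (∑ k : ι, c (i, k) • (gv k : V)) := by
          intro i
          refine (hWmem _).mp ?_
          exact Submodule.sum_mem _ (fun k _ => Submodule.smul_mem _ _ (gv k).2)
        have hall := part1 r (fun i => ∑ k : ι, c (i, k) • (gv k : V)) hPi hre
        have hzeroW : ∑ k : ι, c (p.1, k) • gv k = 0 := by
          apply Subtype.ext
          push_cast
          simpa using hall p.1
        have := (Fintype.linearIndependent_iff.mp hind) (fun k => c (p.1, k)) hzeroW p.2
        simpa using this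
      have hcard := hindep.fintype_card_le_finrank
      rw [Fintype.card_prod, Fintype.card_fin] at hcard
      exact le_trans hcard (hUrank (D + r))
    have h1 := key (m * (D + 1))
    have h2 : (m * (D + 1) + 1) * (m + 1) ≤ (m * (D + 1) + 1) * Fintype.card ι :=
      Nat.mul_le_mul_left _ hn'
    nlinarith [h1, h2]
  have hrank : Module.rank ℂ W ≤ (m : Cardinal) := rank_le (fun t ht => hbound t ht)
  have hnoeth : IsNoetherian ℂ W :=
    IsNoetherian.iff_rank_lt_aleph0.mpr (lt_of_le_of_lt hrank (Cardinal.nat_lt_aleph0 m))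
  exact IsNoetherian.iff_fg.mp hnoeth
end

section
/- Let p, i, j ∈ ℂ with p ≠ 0, and let φ ∈ ℂ[X,Y] satisfy, for all ∂, λ, μ ∈ ℂ: (p∂ + (i+j+2p)λ)·φ(∂+λ, μ) = ((i + p/2)λ − pμ)·φ(∂, λ+μ) + (p(∂+μ) + (j + (3/2)p)λ)·φ(∂, μ). Then the one-variable polynomial φ(·, 0) is constant: there exists c ∈ ℂ with φ(x, 0) = c for all x ∈ ℂ. -/
open MvPolynomial

private lemma eval_aeval'' (t : ℂ) (g : Fin 2 → Polynomial ℂ) (φ : MvPolynomial (Fin 2) ℂ) :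
    Polynomial.eval t (MvPolynomial.aeval g φ) = MvPolynomial.eval (fun k => (g k).eval t) φ := by
  induction φ using MvPolynomial.induction_on with
  | C a => simp
  | add q r hq hr => simp [hq, hr]
  | mul_X q n hq => simp [hq]

private lemma fun_pair (t : ℂ) (u v : Polynomial ℂ) :
    (fun k => Polynomial.eval t (![u, v] k)) = ![u.eval t, v.eval t] := by
  funext k; fin_cases k <;> simp

private lemma periodic_const (q : Polynomial ℂ) (l : ℂ) (hl : l ≠ 0)
    (h : ∀ x, q.eval (x + l) = q.eval x) : ∀ x, q.eval x = q.eval 0 := by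
  have hr : q - Polynomial.C (q.eval 0) = 0 := by
    apply Polynomial.eq_zero_of_infinite_isRoot
    apply Set.infinite_of_injective_forall_mem (f := fun n : ℕ => (n : ℂ) * l)
    · intro a b hab
      exact Nat.cast_injective (mul_right_cancel₀ hl hab)
    · intro n
      induction n with
      | zero => simp [Polynomial.IsRoot]
      | succ k ih =>
        simp only [Polynomial.IsRoot, Polynomial.eval_sub, Polynomial.eval_C, sub_eq_zero,
          Set.mem_setOf_eq] at ih ⊢
        push_cast
        rw [add_mul, one_mul, h, ih]
  intro x
  have := congrArg (Polynomial.eval x) hr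
  simpa [sub_eq_zero] using this

private lemma factor_ne (p a : ℂ) (hp : p ≠ 0) :
    Polynomial.C p * Polynomial.X + Polynomial.C a ≠ 0 := by
  intro h0
  have := congrArg (fun q => Polynomial.coeff q 1) h0
  simp [Polynomial.coeff_C] at this
  exact hp this

/-- Let `p, i, j ∈ ℂ` with `p ≠ 0`, and let `φ ∈ ℂ[X,Y]` satisfy, for all `∂, λ, μ ∈ ℂ`:
`(p∂ + (i+j+2p)λ)·φ(∂+λ, μ)
  = ((i + p/2)λ − pμ)·φ(∂, λ+μ) + (p(∂+μ) + (j + (3/2)p)λ)·φ(∂, μ)`.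
Then the one-variable polynomial `φ(·, 0)` is constant. -/
theorem structure_polynomial_phi4 (p i j : ℂ) (hp : p ≠ 0)
    (φ : MvPolynomial (Fin 2) ℂ)
    (hφ : ∀ x l m : ℂ,
      (p * x + (i + j + 2 * p) * l) * eval ![x + l, m] φ =
        ((i + p / 2) * l - p * m) * eval ![x, l + m] φ +
          (p * (x + m) + (j + 3 / 2 * p) * l) * eval ![x, m] φ) :
    ∃ c : ℂ, ∀ x : ℂ, eval ![x, 0] φ = c := by
  -- key: for all l, x : φ(x+l, Bl/p) = φ(x, Bl/p) where B = i + p/2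
  have key : ∀ l x : ℂ,
      eval ![x + l, (i + p / 2) * l / p] φ = eval ![x, (i + p / 2) * l / p] φ := by
    intro l
    set y := (i + p / 2) * l / p with hy
    have heq : ∀ x : ℂ,
        (p * x + (i + j + 2 * p) * l) * eval ![x + l, y] φ =
          (p * x + (i + j + 2 * p) * l) * eval ![x, y] φ := by
      intro x
      have h := hφ x l y
      have h1 : (i + p / 2) * l - p * y = 0 := by
        rw [hy]; field_simp; ring
      have h2 : p * (x + y) + (j + 3 / 2 * p) * l = p * x + (i + j + 2 * p) * l := by
        rw [hy]; field_simp; ring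
      rw [h1, h2] at h
      simpa using h
    set Q : Polynomial ℂ :=
      MvPolynomial.aeval ![Polynomial.X + Polynomial.C l, Polynomial.C y] φ -
        MvPolynomial.aeval ![Polynomial.X, Polynomial.C y] φ with hQdef
    have hQ : (Polynomial.C p * Polynomial.X + Polynomial.C ((i + j + 2 * p) * l)) * Q = 0 := by
      apply Polynomial.funext
      intro x
      simp only [Polynomial.eval_mul, Polynomial.eval_add, Polynomial.eval_C, Polynomial.eval_X,
        Polynomial.eval_sub, hQdef, eval_aeval'', fun_pair, Polynomial.eval_zero]
      rw [mul_sub]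
      rw [heq x]
      ring
    have hQ0 : Q = 0 :=
      (mul_eq_zero.mp hQ).resolve_left (factor_ne p ((i + j + 2 * p) * l) hp)
    intro x
    have := congrArg (Polynomial.eval x) hQ0
    simp only [hQdef, Polynomial.eval_sub, eval_aeval'', fun_pair, Polynomial.eval_zero,
      Polynomial.eval_add, Polynomial.eval_X, Polynomial.eval_C, sub_eq_zero] at this
    exact this
  by_cases hB : i + p / 2 = 0
  · refine ⟨eval ![0, 0] φ, fun x => ?_⟩
    have h := key x 0
    rw [hB] at h
    simpa using h
  · refine ⟨eval ![0, 0] φ, fun x => ?_⟩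
    have hy : ∀ y : ℂ, y ≠ 0 → eval ![x, y] φ = eval ![0, y] φ := by
      intro y hy0
      set l : ℂ := p * y / (i + p / 2) with hl
      have hl0 : l ≠ 0 := div_ne_zero (mul_ne_zero hp hy0) hB
      have hyl : (i + p / 2) * l / p = y := by
        have h1 : (i + p / 2) * (p * y / (i + p / 2)) = p * y := mul_div_cancel₀ _ hB
        rw [hl, h1, mul_comm p y, mul_div_assoc, div_self hp, mul_one]
      set q : Polynomial ℂ := MvPolynomial.aeval ![Polynomial.X, Polynomial.C y] φ with hq
      have hqe : ∀ t : ℂ, q.eval t = eval ![t, y] φ := by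
        intro t
        simp [hq, eval_aeval'', fun_pair]
      have hper : ∀ t : ℂ, q.eval (t + l) = q.eval t := by
        intro t
        rw [hqe, hqe]
        have := key l t
        rwa [hyl] at this
      have := periodic_const q l hl0 hper x
      rwa [hqe, hqe] at this
    have hr : MvPolynomial.aeval ![Polynomial.C x, Polynomial.X] φ -
        MvPolynomial.aeval ![Polynomial.C 0, Polynomial.X] φ = 0 := by
      apply Polynomial.eq_zero_of_infinite_isRoot
      apply Set.Infinite.mono (s := {y : ℂ | y ≠ 0})
      · intro y hy0
        simp only [Set.mem_setOf_eq, Polynomial.IsRoot, Polynomial.eval_sub, eval_aeval'',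
          fun_pair, Polynomial.eval_C, Polynomial.eval_X, sub_eq_zero]
        exact hy y hy0
      · exact Set.Finite.infinite_compl (Set.finite_singleton 0)
    have := congrArg (Polynomial.eval 0) hr
    simpa [eval_aeval'', fun_pair, sub_eq_zero] using this
end

section
/- Let p, i, j ∈ ℂ with p ≠ 0, and let φ ∈ ℂ[X,Y] satisfy, for all ∂, λ, μ ∈ ℂ: (p∂ + (i+j+p)λ)·φ(∂+λ, μ) = ((i + p/2)λ − pμ)·φ(∂, λ+μ) + (p(∂+μ) + (j + (3/2)p)λ)·φ(∂, μ). Then there exists c ∈ ℂ with φ(x, 0) = c·x for all x ∈ ℂ. -/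
/-!
Specialising the functional equation to `μ = 0` and differentiating in `λ` at `λ = 0` gives the
Euler equation `x P'(x) = P(x)` for `P(x) = φ(x, 0)`; comparing coefficients, `n aₙ = aₙ` forces
every coefficient of `P` other than the linear one to vanish.
-/

namespace MvPolynomial

theorem polynomial_eval_aeval {R σ : Type*} [CommSemiring R]
    (g : σ → Polynomial R) (φ : MvPolynomial σ R) (x : R) :
    (aeval g φ).eval x = eval (fun s => (g s).eval x) φ := by
  rw [aeval_def, polynomial_eval_eval₂]
  congr 1
  ext; simp

variable {R : Type*} [CommSemiring R] (φ : MvPolynomial (Fin 2) R)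

theorem eval_aeval_X_C (x b : R) :
    (aeval ![Polynomial.X, Polynomial.C b] φ).eval x = eval ![x, b] φ := by
  rw [polynomial_eval_aeval]; congr 2; funext k; fin_cases k <;> simp

theorem eval_aeval_C_X (a y : R) :
    (aeval ![Polynomial.C a, Polynomial.X] φ).eval y = eval ![a, y] φ := by
  rw [polynomial_eval_aeval]; congr 2; funext k; fin_cases k <;> simp

end MvPolynomial

namespace Polynomial

theorem eq_C_coeff_one_mul_X_of_X_mul_derivative_eq {R : Type*} [CommRing R] [IsDomain R]
    [CharZero R] {P : R[X]} (h : X * derivative P = P) : P = C (P.coeff 1) * X := by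
  ext n
  have hn := congrArg (coeff · n) h
  rcases n with _ | _ | n
  · simpa using hn.symm
  · simp
  · simp only [coeff_X_mul, coeff_derivative, coeff_C_mul_X, Nat.cast_add, Nat.cast_one] at hn ⊢
    have : P.coeff (n + 2) * ((n : R) + 1) = 0 := by linear_combination hn
    simpa [Nat.cast_add_one_ne_zero] using this

/-- `Q x` plays the role of `φ(x, ·)`, and `P` that of `φ(·, 0)`. -/
theorem X_mul_derivative_eq_of_functional_equation {K : Type*} [Field K] [CharZero K]
    {p i j : K} (hp : p ≠ 0) {P : K[X]} {Q : K → K[X]} (hQ : ∀ x, (Q x).eval 0 = P.eval x)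
    (h : ∀ x l : K, (p * x + (i + j + p) * l) * P.eval (x + l) =
      (i + p / 2) * l * (Q x).eval l + (p * x + (j + 3 / 2 * p) * l) * P.eval x) :
    X * derivative P = P := by
  refine funext fun x => ?_
  have hpoly : (C (p * x) + C (i + j + p) * X) * P.comp (X + C x) =
      C (i + p / 2) * X * Q x + (C (p * x) + C (j + 3 / 2 * p) * X) * C (P.eval x) :=
    funext fun l => by simpa [add_comm l] using h x l
  have hderiv := congrArg (fun f => (derivative f).eval 0) hpoly
  simp only [derivative_mul, derivative_add, derivative_C, derivative_X, derivative_comp,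
    eval_add, eval_mul, eval_comp, eval_C, eval_X, eval_one, hQ, zero_mul, zero_add, mul_one,
    mul_zero, add_zero] at hderiv
  rw [eval_mul, eval_X]
  refine mul_left_cancel₀ hp ?_
  linear_combination hderiv

end Polynomial

open MvPolynomial

/-- Let `p, i, j ∈ ℂ` with `p ≠ 0`, and let `φ ∈ ℂ[X,Y]` satisfy, for all `∂, λ, μ ∈ ℂ`:
`(p∂ + (i+j+p)λ)·φ(∂+λ, μ)
  = ((i + p/2)λ − pμ)·φ(∂, λ+μ) + (p(∂+μ) + (j + (3/2)p)λ)·φ(∂, μ)`.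
Then there exists `c ∈ ℂ` with `φ(x, 0) = c·x` for all `x ∈ ℂ`. -/
theorem structure_polynomial_phi3 (p i j : ℂ) (hp : p ≠ 0)
    (φ : MvPolynomial (Fin 2) ℂ)
    (hφ : ∀ x l m : ℂ,
      (p * x + (i + j + p) * l) * eval ![x + l, m] φ =
        ((i + p / 2) * l - p * m) * eval ![x, l + m] φ +
          (p * (x + m) + (j + 3 / 2 * p) * l) * eval ![x, m] φ) :
    ∃ c : ℂ, ∀ x : ℂ, eval ![x, 0] φ = c * x := by
  set P : Polynomial ℂ := aeval ![Polynomial.X, Polynomial.C 0] φ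
  have hP (x : ℂ) : P.eval x = eval ![x, 0] φ := eval_aeval_X_C φ x 0
  have hEuler : Polynomial.X * Polynomial.derivative P = P :=
    Polynomial.X_mul_derivative_eq_of_functional_equation hp
      (Q := fun x => aeval ![Polynomial.C x, Polynomial.X] φ)
      (fun x => by rw [eval_aeval_C_X, hP])
      (fun x l => by simpa [hP, eval_aeval_C_X] using hφ x l 0)
  refine ⟨P.coeff 1, fun x => ?_⟩
  rw [← hP, Polynomial.eq_C_coeff_one_mul_X_of_X_mul_derivative_eq hEuler]
  simp
end
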